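/- arXiv:2601.12107 — 7 statements merged into one kernel-verified Lean document; each statement's English description precedes it below -/
import Mathlib

section
/- Let p be a prime and n ≥ 2 an integer, and let π be a polynomial with integer coefficients. Then π is a permutation polynomial over ℤ_{p^n} if and only if π is a permutation polynomial over ℤ_p and the formal derivative of π satisfies π′(k) ≢ 0 (mod p) for every integer k. -/
/-!
Write `b = a + p^j t`. Taylor expansion gives `π(b) - π(a) ≡ π'(a) p^j t (mod p^{2j})`, so when
`p ∤ π'` a congruence `π(b) ≡ π(a) (mod p^{j+1})` forces `p ∣ t`: injectivity modulo `p` lifts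
step by step to injectivity modulo `p^n`. Conversely, if `p ∣ π'(a)` then `π(a + p^{n-1}) ≡ π(a)`
modulo `p^n`, because `2(n-1) ≥ n`; and a permutation of `ℤ/p^n` induces a surjection, hence a
permutation, of its quotient `ℤ/p`.
-/

open Polynomial

section CommRing

variable {R : Type*} [CommRing R]

theorem Polynomial.sq_dvd_eval_add_sub_eval_sub_derivative (π : R[X]) (a h : R) :
    h ^ 2 ∣ π.eval (a + h) - π.eval a - (derivative π).eval a * h :=
  let ⟨k, hk⟩ := π.binomExpansion a h
  ⟨k, by rw [hk]; ring⟩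

theorem Polynomial.pow_succ_dvd_eval_add_pow_sub_eval {p : R} (π : R[X]) (a : R)
    (hd : p ∣ (derivative π).eval a) {m : ℕ} (hm : 1 ≤ m) :
    p ^ (m + 1) ∣ π.eval (a + p ^ m) - π.eval a := by
  have hlin : p ^ (m + 1) ∣ (derivative π).eval a * p ^ m := by
    rw [pow_succ']; exact mul_dvd_mul_right hd _
  have hquad : p ^ (m + 1) ∣ (p ^ m) ^ 2 :=
    (pow_dvd_pow p (show m + 1 ≤ m * 2 by omega)).trans (pow_mul p m 2).dvd
  have htaylor := (hquad.trans (π.sq_dvd_eval_add_sub_eval_sub_derivative a (p ^ m))).add hlin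
  rwa [sub_add_cancel] at htaylor

theorem Polynomial.pow_succ_dvd_sub_of_pow_succ_dvd_eval_sub [IsDomain R] {p : R} (hp : Prime p)
    (π : R[X]) {a b : R} (hd : ¬ p ∣ (derivative π).eval b) {j : ℕ} (hj : 1 ≤ j)
    (hab : p ^ j ∣ a - b) (hπ : p ^ (j + 1) ∣ π.eval a - π.eval b) :
    p ^ (j + 1) ∣ a - b := by
  obtain ⟨t, ht⟩ := hab
  obtain rfl : a = b + p ^ j * t := by rw [← ht, add_sub_cancel]
  have hquad : p ^ (j + 1) ∣ (p ^ j * t) ^ 2 := by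
    rw [mul_pow, ← pow_mul]
    exact (pow_dvd_pow p (show j + 1 ≤ j * 2 by omega)).mul_right _
  have hlin : p ^ j * p ∣ p ^ j * ((derivative π).eval b * t) := by
    have htaylor := hquad.trans (π.sq_dvd_eval_add_sub_eval_sub_derivative b (p ^ j * t))
    rw [← pow_succ]
    convert dvd_sub hπ htaylor using 1
    ring
  have hpt : p ∣ t :=
    (hp.dvd_or_dvd ((mul_dvd_mul_iff_left (pow_ne_zero j hp.ne_zero)).mp hlin)).resolve_left hd
  rw [add_sub_cancel_left, pow_succ]
  exact mul_dvd_mul_left _ hpt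

theorem Polynomial.pow_dvd_sub_of_pow_dvd_eval_sub [IsDomain R] {p : R} (hp : Prime p)
    (π : R[X]) (hd : ∀ k, ¬ p ∣ (derivative π).eval k)
    (hinj : ∀ a b, p ∣ π.eval a - π.eval b → p ∣ a - b) {n : ℕ} (hn : 1 ≤ n) (a b : R) :
    p ^ n ∣ π.eval a - π.eval b → p ^ n ∣ a - b := by
  induction n, hn using Nat.le_induction with
  | base => simpa using hinj a b
  | succ j hj ih =>
    intro hπ
    exact π.pow_succ_dvd_sub_of_pow_succ_dvd_eval_sub hp (hd b) hj
      (ih ((pow_dvd_pow p j.le_succ).trans hπ)) hπ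

end CommRing

theorem Polynomial.bijective_eval_map_zmod_iff (m : ℕ) [NeZero m] (π : ℤ[X]) :
    Function.Bijective (fun x : ZMod m => (π.map (Int.castRingHom (ZMod m))).eval x) ↔
      ∀ a b : ℤ, (m : ℤ) ∣ π.eval a - π.eval b → (m : ℤ) ∣ a - b := by
  rw [← Finite.injective_iff_bijective]
  constructor
  · intro hinj a b hab
    have : ((b : ℤ) : ZMod m) = a := hinj (by
      simp only [eval_intCast_map, eq_intCast]
      exact (ZMod.intCast_eq_intCast_iff_dvd_sub _ _ _).mpr hab)
    exact (ZMod.intCast_eq_intCast_iff_dvd_sub _ _ _).mp this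
  · intro h x y hxy
    obtain ⟨a, rfl⟩ := ZMod.intCast_surjective x
    obtain ⟨b, rfl⟩ := ZMod.intCast_surjective y
    simp only [eval_intCast_map, eq_intCast] at hxy
    exact (ZMod.intCast_eq_intCast_iff_dvd_sub _ _ _).mpr
      (h b a ((ZMod.intCast_eq_intCast_iff_dvd_sub _ _ _).mp hxy))

theorem Polynomial.surjective_eval_map_of_surjective {R S : Type*} [Ring R] [Ring S]
    (f : R →+* S) (hf : Function.Surjective f) (π : ℤ[X])
    (h : Function.Surjective fun x : R => (π.map (Int.castRingHom R)).eval x) :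
    Function.Surjective fun y : S => (π.map (Int.castRingHom S)).eval y := by
  intro c
  obtain ⟨r, rfl⟩ := hf c
  obtain ⟨x, rfl⟩ := h r
  refine ⟨f x, ?_⟩
  rw [← eval_map_apply, map_map, RingHom.ext_int (f.comp (Int.castRingHom R))]

/-- Lemma 2.2(i) (Hardman): for a prime `p` and `n ≥ 2`, a polynomial `π ∈ ℤ[x]` is a
permutation polynomial over `ℤ_{p^n}` iff it is a permutation polynomial over `ℤ_p` and its
formal derivative satisfies `π'(k) ≢ 0 (mod p)` for every integer `k`. -/
theorem stmt_1 (p : ℕ) (hp : p.Prime) (n : ℕ) (hn : 2 ≤ n) (π : Polynomial ℤ) :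
    Function.Bijective
        (fun x : ZMod (p ^ n) => (π.map (Int.castRingHom (ZMod (p ^ n)))).eval x) ↔
      (Function.Bijective (fun x : ZMod p => (π.map (Int.castRingHom (ZMod p))).eval x) ∧
        ∀ k : ℤ, ¬ ((Polynomial.derivative π).eval k ≡ 0 [ZMOD (p : ℤ)])) := by
  have : Fact p.Prime := ⟨hp⟩
  have hpZ : Prime (p : ℤ) := Nat.prime_iff_prime_int.mp hp
  simp only [Int.modEq_zero_iff_dvd]
  constructor
  · intro hbij
    refine ⟨Finite.surjective_iff_bijective.mp <| π.surjective_eval_map_of_surjective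
      (ZMod.castHom (dvd_pow_self p (by omega)) (ZMod p)) (ZMod.ringHom_surjective _)
      hbij.surjective, fun k hk => ?_⟩
    rw [π.bijective_eval_map_zmod_iff (p ^ n), Nat.cast_pow] at hbij
    obtain ⟨m, hm, rfl⟩ : ∃ m, 1 ≤ m ∧ n = m + 1 := ⟨n - 1, by omega, by omega⟩
    have hcollide := hbij _ _ (π.pow_succ_dvd_eval_add_pow_sub_eval k hk hm)
    rw [add_sub_cancel_left, pow_dvd_pow_iff hpZ.ne_zero hpZ.not_isUnit] at hcollide
    omega
  · rintro ⟨hinj, hd⟩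
    rw [π.bijective_eval_map_zmod_iff p] at hinj
    rw [π.bijective_eval_map_zmod_iff (p ^ n), Nat.cast_pow]
    exact π.pow_dvd_sub_of_pow_dvd_eval_sub hpZ hd hinj (by omega)
end

section
/- Let p be a prime, n a positive integer, and N = p^n·N₁, where gcd(p, N₁) = 1 and N₁ is either 1 or a product q₁q₂⋯q_r of distinct primes each satisfying gcd(p, q_i − 1) = 1. If a, b are integers with a ≢ 0 (mod p), a ≢ −1 (mod p), and N₁ ∣ a, then π(x) = x^p + a·x + b is a permutation polynomial over ℤ_N. -/
/-!
By the Chinese remainder theorem it suffices to show that `π` is injective modulo `p ^ n` and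
modulo each `qᵢ`. Modulo `qᵢ` we have `a ≡ 0`, and `x ↦ x ^ p` is injective on `(ZMod qᵢ)ˣ`
because `p` is prime to its order `qᵢ - 1`. Modulo `p`, Fermat turns `π(x) - b` into `(a + 1) x`,
so `π(x) ≡ π(y)` forces `x ≡ y (mod p)`; then in `π(x) - π(y) = (x - y)(∑ xⁱ yᵖ⁻¹⁻ⁱ + a)` the
second factor is `≡ p xᵖ⁻¹ + a ≡ a (mod p)`, hence a unit modulo `p ^ n`.
-/

open Finset Function

theorem pow_injective_of_coprime_card_sub_one {G₀ : Type*} [GroupWithZero G₀] [Fintype G₀]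
    {p : ℕ} (hp : p ≠ 0) (h : (Fintype.card G₀ - 1).Coprime p) :
    Injective fun x : G₀ => x ^ p := by
  classical
  intro x y hxy
  have hcard : (Nat.card G₀ˣ).Coprime p := by
    rwa [Nat.card_eq_fintype_card, Fintype.card_units]
  obtain rfl | hx := eq_or_ne x 0
  · exact ((pow_eq_zero_iff hp).mp (hxy.symm.trans (zero_pow hp))).symm
  obtain rfl | hy := eq_or_ne y 0
  · exact (pow_eq_zero_iff hp).mp (hxy.trans (zero_pow hp))
  have : Units.mk0 x hx = Units.mk0 y hy :=
    (powCoprime hcard).injective (Units.ext (by simpa using hxy))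
  exact congrArg Units.val this

theorem ZMod.isUnit_of_castHom_ne_zero {p : ℕ} [Fact p.Prime] {n : ℕ} (hn : n ≠ 0)
    {x : ZMod (p ^ n)} (hx : castHom (dvd_pow_self p hn) (ZMod p) x ≠ 0) : IsUnit x := by
  have : NeZero (p ^ n) := ⟨pow_ne_zero n (Fact.out : p.Prime).ne_zero⟩
  rw [← natCast_zmod_val x, isUnit_natCast_iff_not_dvd_pow Fact.out (Nat.pos_of_ne_zero hn),
    ← natCast_eq_zero_iff]
  rwa [castHom_apply, cast_eq_val] at hx

theorem ZMod.pow_add_mul_injective {p : ℕ} [Fact p.Prime] (n : ℕ) {a : ℤ}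
    (ha0 : (a : ZMod p) ≠ 0) (ha1 : (a : ZMod p) ≠ -1) :
    Injective fun x : ZMod (p ^ n) => x ^ p + a * x := by
  obtain rfl | hn := eq_or_ne n 0
  · exact fun x y _ => Subsingleton.elim (α := ZMod 1) x y
  intro x y (hxy : x ^ p + a * x = y ^ p + a * y)
  set φ := castHom (dvd_pow_self p hn) (ZMod p)
  have hφ : ∀ z, φ (z ^ p + a * z) = (a + 1) * φ z := fun z => by
    rw [map_add, map_pow, map_mul, map_intCast, pow_card]; ring
  have hxy_mod_p : φ x = φ y := by
    have := hφ x
    rw [hxy, hφ y] at this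
    exact (mul_left_cancel₀ (by rwa [Ne, add_eq_zero_iff_eq_neg]) this).symm
  have hunit : IsUnit (∑ i ∈ range p, x ^ i * y ^ (p - 1 - i) + a) := by
    refine isUnit_of_castHom_ne_zero hn ?_
    rwa [map_add, RingHom.map_geom_sum₂, map_intCast, ← hxy_mod_p, geom_sum₂_self,
      natCast_self, zero_mul, zero_add]
  have : (x - y) * (∑ i ∈ range p, x ^ i * y ^ (p - 1 - i) + a) = 0 := by
    linear_combination geom_sum₂_mul x y p + hxy
  exact sub_eq_zero.mp ((hunit.mul_left_eq_zero).mp this)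

theorem ZMod.eq_of_castHom_eq_of_coprime {m k : ℕ} (h : m.Coprime k) {x y : ZMod (m * k)}
    (hm : castHom (dvd_mul_right m k) (ZMod m) x = castHom (dvd_mul_right m k) (ZMod m) y)
    (hk : castHom (dvd_mul_left k m) (ZMod k) x = castHom (dvd_mul_left k m) (ZMod k) y) :
    x = y :=
  (chineseRemainder h).injective <|
    Prod.ext (by simpa [chineseRemainder] using hm) (by simpa [chineseRemainder] using hk)

theorem ZMod.eq_of_forall_castHom_eq {ι : Type*} [Fintype ι] {m : ι → ℕ}
    (h : Pairwise (Nat.Coprime on m)) {x y : ZMod (∏ i, m i)}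
    (hxy : ∀ i, castHom (dvd_prod_of_mem m (mem_univ i)) (ZMod (m i)) x =
      castHom (dvd_prod_of_mem m (mem_univ i)) (ZMod (m i)) y) : x = y :=
  (prodEquivPi m h).injective (funext fun i => by simpa using hxy i)

theorem stmt_5_general (p : ℕ) (hp : p.Prime) (n : ℕ)
    (N N₁ : ℕ) (hN : N = p ^ n * N₁) (hcop : Nat.Coprime p N₁)
    (r : ℕ) (q : Fin r → ℕ) (hq : ∀ i, (q i).Prime) (hinj : Function.Injective q)
    (hN₁ : N₁ = ∏ i, q i) (hqcop : ∀ i, Nat.Coprime p (q i - 1))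
    (a b : ℤ) (ha0 : ¬ a ≡ 0 [ZMOD (p : ℤ)]) (ha1 : ¬ a ≡ -1 [ZMOD (p : ℤ)])
    (haN₁ : (N₁ : ℤ) ∣ a) :
    Function.Bijective
      (fun x : ZMod N => x ^ p + (a : ZMod N) * x + (b : ZMod N)) := by
  have : Fact p.Prime := ⟨hp⟩
  subst hN hN₁
  have : NeZero (p ^ n * ∏ i, q i) :=
    ⟨mul_ne_zero (pow_ne_zero n hp.ne_zero) (prod_ne_zero_iff.mpr fun i _ => (hq i).ne_zero)⟩
  refine Finite.injective_iff_bijective.mp fun x y hxy => ?_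
  have hmap {S : Type} [CommRing S] (φ : ZMod (p ^ n * ∏ i, q i) →+* S) :
      φ x ^ p + a * φ x = φ y ^ p + a * φ y := by
    simpa using congrArg φ hxy
  refine ZMod.eq_of_castHom_eq_of_coprime (hcop.pow_left n)
    (ZMod.pow_add_mul_injective n ?_ ?_ (hmap _)) ?_
  · exact fun h => ha0 ((ZMod.intCast_eq_intCast_iff _ _ _).mp (by simpa using h))
  · exact fun h => ha1 ((ZMod.intCast_eq_intCast_iff _ _ _).mp (by simpa using h))
  refine ZMod.eq_of_forall_castHom_eq
    (fun i j hij => (Nat.coprime_primes (hq i) (hq j)).mpr (hinj.ne hij)) fun i => ?_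
  have : Fact (q i).Prime := ⟨hq i⟩
  have ha : (a : ZMod (q i)) = 0 := (ZMod.intCast_zmod_eq_zero_iff_dvd _ _).mpr
    ((Int.natCast_dvd_natCast.mpr (dvd_prod_of_mem q (mem_univ i))).trans haN₁)
  refine pow_injective_of_coprime_card_sub_one hp.ne_zero
    (by rw [ZMod.card]; exact (hqcop i).symm) ?_
  simpa only [RingHom.comp_apply, ha, zero_mul, add_zero] using
    hmap ((ZMod.castHom (dvd_prod_of_mem q (mem_univ i)) (ZMod (q i))).comp
      (ZMod.castHom (dvd_mul_left _ _) _))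

/-- Lemma 3.3 (first part): let `p` be a prime, `n ≥ 1`, `N = p^n·N₁` with `gcd(p,N₁)=1`
and `N₁` equal to `1` or a product of distinct primes `qᵢ` with `gcd(p, qᵢ−1) = 1`.
If `a ≢ 0, −1 (mod p)` and `N₁ ∣ a`, then `π(x) = x^p + a·x + b` permutes `ℤ_N`. -/
theorem stmt_5 (p : ℕ) (hp : p.Prime) (n : ℕ) (hn : 0 < n)
    (N N₁ : ℕ) (hN : N = p ^ n * N₁) (hcop : Nat.Coprime p N₁)
    (r : ℕ) (q : Fin r → ℕ) (hq : ∀ i, (q i).Prime) (hinj : Function.Injective q)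
    (hN₁ : N₁ = ∏ i, q i) (hqcop : ∀ i, Nat.Coprime p (q i - 1))
    (a b : ℤ) (ha0 : ¬ a ≡ 0 [ZMOD (p : ℤ)]) (ha1 : ¬ a ≡ -1 [ZMOD (p : ℤ)])
    (haN₁ : (N₁ : ℤ) ∣ a) :
    Function.Bijective
      (fun x : ZMod N => x ^ p + (a : ZMod N) * x + (b : ZMod N)) :=
  stmt_5_general p hp n N N₁ hN hcop r q hq hinj hN₁ hqcop a b ha0 ha1 haN₁
end

section
/- Let p ≥ 3 be a prime, n ≥ 2 an integer, and N = p^n·N₁, where gcd(p, N₁) = 1 and N₁ is either 1 or a product q₁q₂⋯q_r of distinct primes such that (q_i − 1) divides (p − 1) for every i. Let a, b be integers such that π(x) = x^p + a·x + b is a permutation polynomial over ℤ_N with a ≢ 0 (mod p) and a ≢ −1 (mod p), and let s be the Zadoff–Chu sequence of length N with root index u, where gcd(u, N) = 1. Then the interleaved sequence s∘π is a CAZAC sequence: |s(π(k))| = 1 for every k, and for every integer d with 0 < d < N, Σ_{k=0}^{N−1} s(π(k))·conj(s(π(k+d))) = 0. -/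
open Complex Finset Polynomial
open scoped Function Real

/-!
Write `e_M(t) = exp(2πit/M)` and `ε = N mod 2`. Then `s(y) = e_{2N}(-u(y² + εy))`, so the
`d`-th correlation of `s ∘ π` is `∑ₖ e_{2N}(u D(k))` with `D(k) = A(π(k + d)) - A(π(k))`,
`A(y) = y² + εy`. Since `A(y) - A(z) = (y - z)(y + z + ε)`, the choice of `ε` makes `D` modulo
`2R` depend only on `k` modulo `R` whenever `R ≡ ε (mod 2)`. Hence, by the Chinese remainder
theorem, the sum factors along a coprime splitting `N = Q·R`, and it suffices that one local
factor vanish.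

If `p^n ∤ d`, take `Q = p^n` and write `d = p^t d'`. Then `D = d·Φ` with
`Φ = (π(X + d) - π(X))/d · (π(X + d) + π(X) + ε)`, and modulo `p` the first factor is the
constant `a + d^{p-1}`, so `Φ' ≡ 2a(a + d^{p-1}) ≢ 0`. The local sum modulo `p^{n-t}` then
vanishes by stationary phase when `n - t ≥ 2`, and because `Φ` is affine modulo `p` when
`n - t = 1`. If `p^n ∣ d`, some prime `q = q_i` does not divide `d`. As `x^p ≡ x (mod q)`, `D` is
affine modulo `q` with slope `2(1 + a)²d`, which is nonzero because `π` permutes `ℤ/q`. For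
`q = 2` the local factor is a sum of two terms modulo `4`, and these cancel.
-/

noncomputable def expMod (M : ℕ) (t : ℤ) : ℂ := exp (2 * π * I * t / M)

lemma expMod_eq_stdAddChar {M : ℕ} [NeZero M] (t : ℤ) :
    expMod M t = ZMod.stdAddChar (t : ZMod M) :=
  (ZMod.stdAddChar_coe t).symm

lemma expMod_add (M : ℕ) (s t : ℤ) : expMod M (s + t) = expMod M s * expMod M t := by
  simp only [expMod, ← exp_add]
  push_cast
  ring_nf

lemma expMod_eq_of_modEq {M : ℕ} {s t : ℤ} (h : s ≡ t [ZMOD M]) : expMod M s = expMod M t := by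
  rcases eq_or_ne M 0 with rfl | hM
  · rw [Int.natCast_zero, Int.modEq_zero_iff] at h
    rw [h]
  · have : NeZero M := ⟨hM⟩
    rw [expMod_eq_stdAddChar, expMod_eq_stdAddChar, (ZMod.intCast_eq_intCast_iff s t M).mpr h]

lemma expMod_mul_left {M₁ : ℕ} (hM₁ : M₁ ≠ 0) (M₂ : ℕ) (t : ℤ) :
    expMod (M₁ * M₂) (M₁ * t) = expMod M₂ t := by
  rcases eq_or_ne M₂ 0 with rfl | hM₂
  · simp [expMod]
  · simp only [expMod]
    congr 1
    field_simp
    push_cast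
    ring

lemma norm_expMod (M : ℕ) (t : ℤ) : ‖expMod M t‖ = 1 := by
  rw [expMod, show 2 * π * I * t / M = ((2 * π * t / M : ℝ) : ℂ) * I by push_cast; ring]
  exact norm_exp_ofReal_mul_I _

lemma conj_expMod (M : ℕ) (t : ℤ) : (starRingEnd ℂ) (expMod M t) = expMod M (-t) := by
  rw [expMod, expMod, ← exp_conj]
  simp only [map_div₀, map_mul, conj_I, conj_ofReal, map_intCast, map_natCast, map_ofNat]
  push_cast
  ring_nf

lemma expMod_two_one : expMod 2 1 = -1 := by
  rw [expMod, ← exp_pi_mul_I]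
  push_cast
  ring_nf

lemma sum_range_expMod_eq_zero_of_linear {M : ℕ} [NeZero M] {f : ℕ → ℤ} {c β : ZMod M}
    (hc : c ≠ 0) (hf : ∀ x : ℕ, (f x : ZMod M) = c * x + β) :
    ∑ x ∈ range M, expMod M (f x) = 0 := by
  set ψ : AddChar (ZMod M) ℂ := ZMod.stdAddChar
  have hψc : ψ c ≠ 1 := fun h ↦
    hc (ZMod.injective_stdAddChar (h.trans (AddChar.map_zero_eq_one ψ).symm))
  have hterm : ∀ x : ℕ, expMod M (f x) = ψ c ^ x * ψ β := by
    intro x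
    rw [expMod_eq_stdAddChar, hf, AddChar.map_add_eq_mul, ← AddChar.map_nsmul_eq_pow, nsmul_eq_mul,
      mul_comm (x : ZMod M)]
  have hψM : ψ c ^ M = 1 := by
    rw [← AddChar.map_nsmul_eq_pow, nsmul_eq_mul, ZMod.natCast_self, zero_mul,
      AddChar.map_zero_eq_one]
  rw [sum_congr rfl fun x _ ↦ hterm x, ← sum_mul, geom_sum_eq hψc, hψM, sub_self, zero_div,
    zero_mul]

lemma sum_range_mul_eq_sum_sum {M : Type*} [AddCommMonoid M] (f : ℕ → M) (a b : ℕ) :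
    ∑ k ∈ range (a * b), f k = ∑ i ∈ range b, ∑ j ∈ range a, f (i * a + j) := by
  induction b with
  | zero => simp
  | succ b ih => rw [Nat.mul_succ, sum_range_add, ih, sum_range_succ, mul_comm a b]

lemma sum_range_mul_mul_eq_sum_mul_sum_of_coprime {M : Type*} [CommSemiring M] {Q R : ℕ}
    (hQR : Q.Coprime R) {F G : ℕ → M} (hF : ∀ k, F k = F (k % Q)) (hG : ∀ k, G k = G (k % R)) :
    ∑ k ∈ range (Q * R), F k * G k = (∑ i ∈ range Q, F i) * ∑ j ∈ range R, G j := by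
  rw [sum_mul_sum, ← sum_product']
  have hmaps : Set.MapsTo (fun k ↦ (k % Q, k % R)) (range (Q * R) : Set ℕ)
      (range Q ×ˢ range R : Finset (ℕ × ℕ)) := by
    intro k hk
    simp only [coe_range, Set.mem_Iio, coe_product, Set.mem_prod] at hk ⊢
    exact ⟨Nat.mod_lt _ (Nat.pos_of_lt_mul_right hk), Nat.mod_lt _ (Nat.pos_of_lt_mul_left hk)⟩
  have hinj : Set.InjOn (fun k ↦ (k % Q, k % R)) (range (Q * R) : Set ℕ) := by
    intro k hk k' hk' h
    simp only [coe_range, Set.mem_Iio, Prod.mk.injEq] at hk hk' h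
    exact Nat.ModEq.eq_of_lt_of_lt
      ((Nat.modEq_and_modEq_iff_modEq_mul hQR).mp ⟨h.1, h.2⟩) hk hk'
  refine sum_nbij _ hmaps hinj (surjOn_of_injOn_of_card_le _ hmaps hinj (by simp)) ?_
  intro k _
  rw [hF k, hG k]

lemma expMod_mul_eq_mul {M₁ M₂ : ℕ} (hM₁ : M₁ ≠ 0) (hM₂ : M₂ ≠ 0) {c₁ c₂ : ℤ}
    (hc : c₁ * M₂ + c₂ * M₁ = 1) (t : ℤ) :
    expMod (M₁ * M₂) t = expMod M₁ (c₁ * t) * expMod M₂ (c₂ * t) := by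
  conv_lhs => rw [show t = M₂ * (c₁ * t) + M₁ * (c₂ * t) by linear_combination (-t) * hc]
  rw [expMod_add, expMod_mul_left hM₁, mul_comm M₁, expMod_mul_left hM₂]

lemma sum_range_expMod_eq_zero_of_coprime {Q R M₁ M₂ : ℕ} (hQR : Q.Coprime R)
    (hM : M₁.Coprime M₂) (hM₁ : M₁ ≠ 0) (hM₂ : M₂ ≠ 0) {f : ℤ → ℤ}
    (hf₁ : ∀ x y, x ≡ y [ZMOD Q] → f x ≡ f y [ZMOD M₁])
    (hf₂ : ∀ x y, x ≡ y [ZMOD R] → f x ≡ f y [ZMOD M₂])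
    (hvan : ∀ w, IsCoprime (M₁ : ℤ) w → ∑ x ∈ range Q, expMod M₁ (w * f x) = 0) :
    ∑ x ∈ range (Q * R), expMod (M₁ * M₂) (f x) = 0 := by
  obtain ⟨c₂, c₁, hc⟩ := Nat.isCoprime_iff_coprime.mpr hM
  simp_rw [expMod_mul_eq_mul hM₁ hM₂ (by linear_combination hc : c₁ * M₂ + c₂ * M₁ = 1)]
  rw [sum_range_mul_mul_eq_sum_mul_sum_of_coprime hQR, hvan c₁ ⟨c₂, M₂, by linear_combination hc⟩,
    zero_mul]
  · exact fun k ↦ expMod_eq_of_modEq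
      ((hf₁ _ _ (Int.natCast_modEq_iff.mpr (Nat.mod_modEq k Q)).symm).mul_left c₁)
  · exact fun k ↦ expMod_eq_of_modEq
      ((hf₂ _ _ (Int.natCast_modEq_iff.mpr (Nat.mod_modEq k R)).symm).mul_left c₂)

lemma sum_range_expMod_prime_pow_eval_eq_zero {p m : ℕ} [Fact p.Prime] (hm : 2 ≤ m) (Φ : ℤ[X])
    (hΦ : ∀ y : ℤ, ((Φ.derivative.eval y : ℤ) : ZMod p) ≠ 0) :
    ∑ x ∈ range (p ^ m), expMod (p ^ m) (Φ.eval x) = 0 := by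
  set L := p ^ (m - 1)
  have hL : L ≠ 0 := pow_ne_zero _ (Fact.out : p.Prime).ne_zero
  have hpm : p ^ m = L * p := by rw [← pow_succ]; congr; omega
  have hL2 : ((L * p : ℕ) : ℤ) ∣ (L : ℤ) ^ 2 := by
    rw [← hpm]
    push_cast [L]
    rw [← pow_mul]
    exact pow_dvd_pow _ (by omega)
  rw [hpm, sum_range_mul_eq_sum_sum, sum_comm]
  refine sum_eq_zero fun y _ ↦ ?_
  -- Taylor expansion: `Φ (y + i L) ≡ Φ y + L * Φ' y * i` modulo `L ^ 2`
  have hterm : ∀ i : ℕ, expMod (L * p) (Φ.eval ((i * L + y : ℕ) : ℤ)) =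
      expMod p (Φ.derivative.eval (y : ℤ) * i) * expMod (L * p) (Φ.eval (y : ℤ)) := by
    intro i
    obtain ⟨k, hk⟩ := Φ.binomExpansion (y : ℤ) (i * L)
    rw [← expMod_mul_left hL p, ← expMod_add]
    refine expMod_eq_of_modEq (Int.modEq_iff_dvd.mpr ?_)
    rw [show ((i * L + y : ℕ) : ℤ) = y + i * L by push_cast; ring, hk]
    exact (hL2.mul_left (-(k * (i : ℤ) ^ 2))).trans (dvd_of_eq (by ring))
  rw [sum_congr rfl fun i _ ↦ hterm i, ← sum_mul,
    sum_range_expMod_eq_zero_of_linear (β := 0) (hΦ y) fun i ↦ by push_cast; ring, zero_mul]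

def zcPhase (ε y : ℤ) : ℤ := y ^ 2 + ε * y

def corrPhase (P : ℤ[X]) (ε d x : ℤ) : ℤ := zcPhase ε (P.eval (x + d)) - zcPhase ε (P.eval x)

lemma zcPhase_modEq_two_mul {R ε y z : ℤ} (hR : 2 ∣ R ↔ 2 ∣ ε) (h : y ≡ z [ZMOD R]) :
    zcPhase ε y ≡ zcPhase ε z [ZMOD 2 * R] := by
  have hRd : R ∣ z - y := Int.modEq_iff_dvd.mp h
  have hfac : zcPhase ε z - zcPhase ε y = (z - y) * (z + y + ε) := by unfold zcPhase; ring
  rw [Int.modEq_iff_dvd]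
  by_cases h2R : 2 ∣ R
  · have h2 : 2 ∣ z + y + ε := by
      rw [show z + y + ε = (z - y) + 2 * y + ε by ring]
      exact dvd_add (dvd_add (h2R.trans hRd) (dvd_mul_right 2 y)) (hR.mp h2R)
    rw [hfac, mul_comm 2 R]
    exact mul_dvd_mul hRd h2
  · obtain ⟨j, hj⟩ : Odd ε := Int.not_even_iff_odd.mp fun h ↦ h2R (hR.mpr h.two_dvd)
    have heven : ∀ w, 2 ∣ zcPhase ε w := fun w ↦ by
      rw [show zcPhase ε w = w * (w + 1) + 2 * (j * w) by unfold zcPhase; rw [hj]; ring]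
      exact dvd_add (Int.even_mul_succ_self w).two_dvd (dvd_mul_right _ _)
    exact (Int.prime_two.coprime_iff_not_dvd.mpr h2R).mul_dvd (dvd_sub (heven z) (heven y))
      (hfac ▸ hRd.mul_right _)

lemma Polynomial.eval_modEq (P : ℤ[X]) {M x y : ℤ} (h : x ≡ y [ZMOD M]) :
    P.eval x ≡ P.eval y [ZMOD M] :=
  Int.modEq_iff_dvd.mpr ((Int.modEq_iff_dvd.mp h).trans (sub_dvd_eval_sub y x P))

lemma corrPhase_modEq (P : ℤ[X]) (ε d : ℤ) {M x y : ℤ} (h : x ≡ y [ZMOD M]) :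
    corrPhase P ε d x ≡ corrPhase P ε d y [ZMOD M] := by
  unfold corrPhase zcPhase
  gcongr <;> exact eval_modEq P (by gcongr)

lemma corrPhase_modEq_two_mul (P : ℤ[X]) {R ε : ℤ} (hR : 2 ∣ R ↔ 2 ∣ ε) (d : ℤ) {x y : ℤ}
    (h : x ≡ y [ZMOD R]) : corrPhase P ε d x ≡ corrPhase P ε d y [ZMOD 2 * R] :=
  (zcPhase_modEq_two_mul hR (eval_modEq P (h.add_right d))).sub
    (zcPhase_modEq_two_mul hR (eval_modEq P h))

lemma cexp_zc_eq_expMod {N : ℕ} (hN : N ≠ 0) (u m : ℤ) :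
    exp (-(π : ℂ) * I * u * ((m : ℂ) ^ 2 + ((N % 2 : ℕ) : ℂ) * m) / N) =
      expMod (2 * N) (-(u * zcPhase (N % 2 : ℕ) m)) := by
  rw [expMod, zcPhase]
  congr 1
  generalize N % 2 = e
  push_cast
  field_simp

lemma zc_mul_conj_zc_eq_expMod {N : ℕ} (hN : N ≠ 0) {u : ℤ} {s : ℤ → ℂ}
    (hs : ∀ k : ℤ, s k = exp (-(π : ℂ) * I * u * ((k : ℂ) ^ 2 + ((N % 2 : ℕ) : ℂ) * k) / N))
    (P : ℤ[X]) (d x : ℤ) :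
    s (P.eval x) * (starRingEnd ℂ) (s (P.eval (x + d))) =
      expMod (2 * N) (u * corrPhase P (N % 2 : ℕ) d x) := by
  rw [hs, hs, cexp_zc_eq_expMod hN, cexp_zc_eq_expMod hN, conj_expMod, ← expMod_add, corrPhase]
  ring_nf

noncomputable def permPoly (p : ℕ) (a b : ℤ) : ℤ[X] := X ^ p + C a * X + C b

lemma intCast_add_one_ne_zero_of_bijective {N Q p : ℕ} (hp : p ≠ 0) (hQ : 1 < Q) (hQN : Q ∣ N)
    {a b : ℤ} (hπ : Function.Bijective fun x : ZMod N ↦ x ^ p + (a : ZMod N) * x + b) :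
    (a : ZMod Q) + 1 ≠ 0 := by
  have : Fact (1 < Q) := ⟨hQ⟩
  have hsurj : Function.Surjective fun x : ZMod Q ↦ x ^ p + (a : ZMod Q) * x + b := by
    refine Function.Surjective.of_comp (g := ZMod.castHom hQN (ZMod Q)) ?_
    convert (ZMod.castHom_surjective hQN).comp hπ.surjective using 1
    ext x
    simp only [Function.comp_apply, map_add, map_mul, map_pow, map_intCast]
  intro h
  refine zero_ne_one (Finite.injective_iff_surjective.mpr hsurj ?_)
  simp only [zero_pow hp, one_pow, mul_zero, mul_one]
  linear_combination -h

lemma ZMod.pow_eq_self_of_sub_one_dvd {q p : ℕ} [Fact q.Prime] (hp : p ≠ 0)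
    (hqp : (q - 1) ∣ (p - 1)) (z : ZMod q) : z ^ p = z := by
  rcases eq_or_ne z 0 with rfl | hz
  · exact zero_pow hp
  · obtain ⟨e, he⟩ := hqp
    rw [show p = (q - 1) * e + 1 by omega, pow_succ, pow_mul, ZMod.pow_card_sub_one_eq_one hz,
      one_pow, one_mul]

lemma sum_range_expMod_corrPhase_prime {p q : ℕ} [Fact q.Prime] (hq : q ≠ 2) (hp : p ≠ 0)
    (hqp : (q - 1) ∣ (p - 1)) {a d w : ℤ} (b ε : ℤ) (ha : (a : ZMod q) + 1 ≠ 0)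
    (hd : (d : ZMod q) ≠ 0) (hw : (w : ZMod q) ≠ 0) :
    ∑ x ∈ range q, expMod q (w * corrPhase (permPoly p a b) ε d x) = 0 := by
  have h2 : (2 : ZMod q) ≠ 0 := Ring.two_ne_zero (by rwa [ZMod.ringChar_zmod_n])
  refine sum_range_expMod_eq_zero_of_linear (c := w * 2 * (a + 1) ^ 2 * d)
    (β := w * ((a + 1) * d) * ((a + 1) * d + 2 * b + ε)) (by simp [*]) fun x ↦ ?_
  simp only [corrPhase, zcPhase, permPoly, eval_add, eval_pow, eval_X, eval_mul, eval_C]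
  push_cast
  rw [ZMod.pow_eq_self_of_sub_one_dvd hp hqp, ZMod.pow_eq_self_of_sub_one_dvd hp hqp]
  ring

lemma expMod_four_add_expMod_four_neg {c : ℤ} (hc : Odd c) : expMod 4 c + expMod 4 (-c) = 0 := by
  obtain ⟨k, rfl⟩ := hc
  have h4 : expMod 4 2 = -1 := (expMod_mul_left (M₁ := 2) two_ne_zero 2 1).trans expMod_two_one
  have hneg : -(2 * k + 1) ≡ 2 * k + 1 + 2 [ZMOD 4] := Int.modEq_iff_dvd.mpr ⟨k + 1, by ring⟩
  rw [expMod_eq_of_modEq hneg, expMod_add _ (2 * k + 1) 2, h4]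
  ring

lemma sum_range_two_expMod_four_corrPhase {p : ℕ} (hp : p ≠ 0) {a d w ε : ℤ} (b : ℤ)
    (ha : Even a) (hd : Odd d) (hw : Odd w) (hε : Even ε) :
    ∑ x ∈ range 2, expMod 4 (w * corrPhase (permPoly p a b) ε d x) = 0 := by
  set P := permPoly p a b
  have hP : ∀ x : ℤ, ((P.eval x : ℤ) : ZMod 2) = x + b := fun x ↦ by
    simp only [P, permPoly, eval_add, eval_pow, eval_X, eval_mul, eval_C]
    push_cast
    rw [ZMod.pow_eq_self_of_sub_one_dvd hp (one_dvd _), ZMod.intCast_eq_zero_iff_even.mpr ha,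
      zero_mul, add_zero]
  have hd2 : (d : ZMod 2) = 1 := ZMod.intCast_eq_one_iff_odd.mpr hd
  have hodd : Odd (corrPhase P ε d 0) := by
    rw [← ZMod.intCast_eq_one_iff_odd]
    simp only [corrPhase, zcPhase, zero_add]
    push_cast
    rw [hP, hP, hd2, ZMod.intCast_eq_zero_iff_even.mpr hε]
    have h2 : (2 : ZMod 2) = 0 := rfl
    linear_combination (b : ZMod 2) * h2
  have hP2 : ∀ x y : ℤ, (x : ZMod 2) = y → zcPhase ε (P.eval x) ≡ zcPhase ε (P.eval y) [ZMOD 4] :=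
    fun x y h ↦ zcPhase_modEq_two_mul (R := 2) (by simp [hε.two_dvd])
      ((ZMod.intCast_eq_intCast_iff _ _ 2).mp (by rw [hP, hP, h]))
  have hsum : corrPhase P ε d 1 ≡ -corrPhase P ε d 0 [ZMOD 4] := by
    have h := (hP2 (1 + d) 0 (by push_cast; rw [hd2]; rfl)).sub (hP2 1 d (by rw [hd2]; rfl))
    simp only [corrPhase, zero_add]
    convert h using 1
    ring
  rw [sum_range_succ, sum_range_one, Nat.cast_zero, Nat.cast_one,
    expMod_eq_of_modEq (hsum.mul_left w), mul_neg]
  exact expMod_four_add_expMod_four_neg (hw.mul hodd)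

lemma sum_range_expMod_corrPhase_two_mul {p R : ℕ} (hp : p ≠ 0) (hR : Odd R) {a d u ε : ℤ}
    (b : ℤ) (ha : Even a) (hd : Odd d) (hu : Odd u) (hε : Even ε) :
    ∑ x ∈ range (2 * R), expMod (2 * (2 * R)) (u * corrPhase (permPoly p a b) ε d x) = 0 := by
  have h2R : Nat.Coprime 2 R := Nat.coprime_two_left.mpr hR
  rw [show 2 * (2 * R) = 4 * R by ring]
  have h4R : Nat.Coprime 4 R := by simpa using Nat.Coprime.pow_left 2 h2R
  refine sum_range_expMod_eq_zero_of_coprime (f := fun x ↦ u * corrPhase (permPoly p a b) ε d x)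
    h2R h4R four_ne_zero hR.pos.ne' ?_ ?_ ?_
  · intro x y h
    exact (corrPhase_modEq_two_mul _ (by simp [hε.two_dvd]) d h).mul_left u
  · exact fun x y h ↦ (corrPhase_modEq _ _ _ h).mul_left u
  · intro w hw
    simp_rw [← mul_assoc]
    exact sum_range_two_expMod_four_corrPhase hp b ha hd
      ((Int.isCoprime_two_left.mp (hw.of_isCoprime_of_dvd_left ⟨2, rfl⟩)).mul hu) hε

lemma Polynomial.intCast_eval_eq_eval_map {R : Type*} [Ring R] (P : ℤ[X]) (x : ℤ) :
    ((P.eval x : ℤ) : R) = (P.map (Int.castRingHom R)).eval (x : R) := by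
  simp

section PrimePower

variable (p : ℕ) (a b ε d : ℤ)

/-- The divided difference `(π(X + d) - π(X)) / d` of `π = permPoly p a b`. -/
noncomputable def permPolyDiffQuot : ℤ[X] := ∑ i ∈ range p, (X + C d) ^ i * X ^ (p - 1 - i) + C a

noncomputable def corrPoly : ℤ[X] :=
  permPolyDiffQuot p a d * ((permPoly p a b).comp (X + C d) + permPoly p a b + C ε)

lemma C_mul_permPolyDiffQuot :
    C d * permPolyDiffQuot p a d = (permPoly p a b).comp (X + C d) - permPoly p a b := by
  simp only [permPolyDiffQuot, permPoly, add_comp, mul_comp, pow_comp, X_comp, C_comp]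
  linear_combination geom_sum₂_mul (X + C d) (X : ℤ[X]) p

lemma corrPhase_eq_mul_eval_corrPoly (x : ℤ) :
    corrPhase (permPoly p a b) ε d x = d * (corrPoly p a b ε d).eval x := by
  have h := congrArg (eval x) (C_mul_permPolyDiffQuot p a b d)
  simp only [eval_mul, eval_C, eval_sub, eval_comp, eval_add, eval_X] at h
  simp only [corrPhase, zcPhase, corrPoly, eval_mul, eval_add, eval_comp, eval_X, eval_C]
  linear_combination (-((permPoly p a b).eval (x + d) + (permPoly p a b).eval x + ε)) * h

variable [Fact p.Prime]

lemma map_permPolyDiffQuot :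
    (permPolyDiffQuot p a d).map (Int.castRingHom (ZMod p)) = C ((d : ZMod p) ^ (p - 1) + a) := by
  have hp := (Fact.out : p.Prime)
  simp only [permPolyDiffQuot, Polynomial.map_add, Polynomial.map_sum, Polynomial.map_mul,
    Polynomial.map_pow, Polynomial.map_X, Polynomial.map_C, Int.coe_castRingHom, C_add]
  congr 1
  rcases eq_or_ne (d : ZMod p) 0 with hd | hd
  · have h : ∀ i ∈ range p, (X + C (d : ZMod p)) ^ i * X ^ (p - 1 - i) = X ^ (p - 1) := by
      intro i hi
      rw [hd, C_0, add_zero, ← pow_add, Nat.add_sub_cancel' (by simp at hi; omega)]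
    rw [sum_congr rfl h, sum_const, card_range, nsmul_eq_mul, CharP.cast_eq_zero, zero_mul, hd,
      zero_pow (Nat.sub_ne_zero_of_lt hp.one_lt), C_0]
  · have h := geom_sum₂_mul (X + C (d : ZMod p)) X p
    rw [add_pow_char, add_sub_cancel_left, add_sub_cancel_left] at h
    refine mul_right_cancel₀ (C_ne_zero.mpr hd) ?_
    rw [h, ← C_pow, ← C_mul, ← pow_succ, Nat.sub_add_cancel hp.one_le]

lemma derivative_map_corrPoly :
    derivative ((corrPoly p a b ε d).map (Int.castRingHom (ZMod p))) =
      C (2 * a * ((d : ZMod p) ^ (p - 1) + a)) := by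
  rw [corrPoly, Polynomial.map_mul, map_permPolyDiffQuot, derivative_C_mul]
  simp only [permPoly, Polynomial.map_add, Polynomial.map_comp, Polynomial.map_mul,
    Polynomial.map_pow, Polynomial.map_X, Polynomial.map_C, Int.coe_castRingHom, derivative_add,
    derivative_comp, derivative_X_pow, derivative_C, derivative_mul, derivative_X,
    CharP.cast_eq_zero, C_0, zero_mul, zero_add, add_zero, mul_one, one_mul, C_comp]
  rw [← C_add, ← C_mul]
  ring_nf

lemma intCast_eval_corrPoly_of_dvd (hd : (d : ZMod p) = 0) (x : ℤ) :
    (((corrPoly p a b ε d).eval x : ℤ) : ZMod p) = a * (2 * (a + 1) * x + 2 * b + ε) := by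
  rw [intCast_eval_eq_eval_map, corrPoly, Polynomial.map_mul, map_permPolyDiffQuot, hd,
    zero_pow (Nat.sub_ne_zero_of_lt (Fact.out : p.Prime).one_lt)]
  simp only [permPoly, Polynomial.map_add, Polynomial.map_comp, Polynomial.map_mul,
    Polynomial.map_pow, Polynomial.map_X, Polynomial.map_C, Int.coe_castRingHom, eval_mul, eval_C,
    eval_add, eval_comp, eval_pow, eval_X, hd, ZMod.pow_card]
  ring

end PrimePower

lemma ZMod.pow_sub_one_add_ne_zero {p : ℕ} [Fact p.Prime] {a : ZMod p} (ha : a ≠ 0)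
    (ha' : a + 1 ≠ 0) (x : ZMod p) : x ^ (p - 1) + a ≠ 0 := by
  rcases eq_or_ne x 0 with rfl | hx
  · rwa [zero_pow (Nat.sub_ne_zero_of_lt (Fact.out : p.Prime).one_lt), zero_add]
  · rwa [ZMod.pow_card_sub_one_eq_one hx, add_comm]

lemma sum_range_expMod_corrPoly {p m : ℕ} [Fact p.Prime] (hp : p ≠ 2) (hm : m ≠ 0) {a d v : ℤ}
    (b ε : ℤ) (ha : (a : ZMod p) ≠ 0) (ha' : (a : ZMod p) + 1 ≠ 0)
    (hd : m = 1 → (d : ZMod p) = 0) (hv : (v : ZMod p) ≠ 0) :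
    ∑ x ∈ range (p ^ m), expMod (p ^ m) (v * (corrPoly p a b ε d).eval (x : ℤ)) = 0 := by
  have h2 : (2 : ZMod p) ≠ 0 := Ring.two_ne_zero (by rwa [ZMod.ringChar_zmod_n])
  rcases (by omega : m = 1 ∨ 2 ≤ m) with rfl | hm
  · -- the phase is affine modulo `p`
    rw [pow_one]
    refine sum_range_expMod_eq_zero_of_linear (c := v * (a * (2 * (a + 1))))
      (β := v * (a * (2 * b + ε))) (by simp [*]) fun x ↦ ?_
    rw [Int.cast_mul, intCast_eval_corrPoly_of_dvd p a b ε d (hd rfl)]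
    push_cast
    ring
  · have := sum_range_expMod_prime_pow_eval_eq_zero (p := p) hm (C v * corrPoly p a b ε d)
      fun y ↦ ?_
    · simpa only [eval_mul, eval_C] using this
    rw [derivative_C_mul, eval_mul, eval_C, Int.cast_mul, intCast_eval_eq_eval_map,
      ← derivative_map, derivative_map_corrPoly, eval_C]
    exact mul_ne_zero hv (mul_ne_zero (mul_ne_zero h2 ha) (ZMod.pow_sub_one_add_ne_zero ha ha' _))

lemma sum_range_expMod_prime_pow_corrPhase {p n : ℕ} [Fact p.Prime] (hp : p ≠ 2) (hn : 2 ≤ n)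
    {a d w : ℤ} (b ε : ℤ) (ha : (a : ZMod p) ≠ 0) (ha' : (a : ZMod p) + 1 ≠ 0)
    (hd : ¬ (p ^ n : ℤ) ∣ d) (hw : (w : ZMod p) ≠ 0) :
    ∑ x ∈ range (p ^ n), expMod (p ^ n) (w * corrPhase (permPoly p a b) ε d x) = 0 := by
  have hp0 : p ≠ 0 := (Fact.out : p.Prime).ne_zero
  have hd0 : d ≠ 0 := by rintro rfl; exact hd (dvd_zero _)
  have hfin : FiniteMultiplicity (p : ℤ) d := Int.finiteMultiplicity_iff.mpr
    ⟨by rw [Int.natAbs_natCast]; exact (Fact.out : p.Prime).ne_one, hd0⟩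
  obtain ⟨d', hdd', hd'⟩ := hfin.exists_eq_pow_mul_and_not_dvd
  set t := multiplicity (p : ℤ) d
  have ht : t < n := by
    by_contra! h
    exact hd (hdd' ▸ dvd_mul_of_dvd_left (pow_dvd_pow _ h) _)
  obtain ⟨m, rfl⟩ : ∃ m, n = t + m := ⟨n - t, by omega⟩
  set Φ := corrPoly p a b ε d
  have hterm (x : ℤ) : expMod (p ^ (t + m)) (w * corrPhase (permPoly p a b) ε d x) =
      expMod (p ^ m) (w * d' * Φ.eval x) := by
    rw [corrPhase_eq_mul_eval_corrPoly]
    generalize Φ.eval x = e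
    rw [hdd', pow_add, ← expMod_mul_left (pow_ne_zero t hp0) (p ^ m)]
    push_cast
    ring_nf
  simp_rw [hterm]
  rw [pow_add, mul_comm, sum_range_mul_eq_sum_sum]
  refine sum_eq_zero fun i _ ↦ ?_
  have hper (j : ℕ) : expMod (p ^ m) (w * d' * Φ.eval ((i * p ^ m + j : ℕ) : ℤ)) =
      expMod (p ^ m) (w * d' * Φ.eval (j : ℤ)) :=
    expMod_eq_of_modEq ((eval_modEq Φ (Int.modEq_iff_dvd.mpr ⟨-i, by push_cast; ring⟩)).mul_left _)
  rw [sum_congr rfl fun j _ ↦ hper j]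
  refine sum_range_expMod_corrPoly hp (by omega) b ε ha ha' (fun hm ↦ ?_) ?_
  · rw [ZMod.intCast_zmod_eq_zero_iff_dvd, hdd']
    exact dvd_mul_of_dvd_left (dvd_pow_self _ (by omega)) _
  · push_cast
    exact mul_ne_zero hw fun h ↦ hd' ((ZMod.intCast_zmod_eq_zero_iff_dvd _ _).mp h)

lemma ZMod.intCast_ne_zero_of_isCoprime {q : ℕ} [Fact (1 < q)] {w : ℤ} (hw : IsCoprime (q : ℤ) w) :
    (w : ZMod q) ≠ 0 := by
  rw [Ne, ZMod.intCast_zmod_eq_zero_iff_dvd]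
  intro h
  have := Int.isUnit_iff_natAbs_eq.mp (hw.isUnit_of_dvd' dvd_rfl h)
  simp only [Int.natAbs_natCast] at this
  exact (Fact.out : 1 < q).ne' this

lemma sum_range_expMod_corrPhase_odd_mul {Q R : ℕ} (hQ : Odd Q) (hQR : Q.Coprime R) (hR : R ≠ 0)
    (P : ℤ[X]) {d u : ℤ} (hu : IsCoprime (Q : ℤ) u)
    (hvan : ∀ w, IsCoprime (Q : ℤ) w →
      ∑ x ∈ range Q, expMod Q (w * corrPhase P ((Q * R % 2 : ℕ) : ℤ) d x) = 0) :
    ∑ x ∈ range (Q * R), expMod (2 * (Q * R)) (u * corrPhase P ((Q * R % 2 : ℕ) : ℤ) d x) = 0 := by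
  have hε : 2 ∣ (R : ℤ) ↔ 2 ∣ ((Q * R % 2 : ℕ) : ℤ) := by
    have h := Nat.mul_mod Q R 2
    rw [Nat.odd_iff.mp hQ, one_mul] at h
    norm_cast
    omega
  rw [show 2 * (Q * R) = Q * (2 * R) by ring]
  refine sum_range_expMod_eq_zero_of_coprime (f := fun x ↦ u * corrPhase P _ d x) hQR
    ((Nat.coprime_two_right.mpr hQ).mul_right hQR) hQ.pos.ne' (by omega)
    (fun x y h ↦ (corrPhase_modEq _ _ _ h).mul_left u) (fun x y h ↦ ?_) fun w hw ↦ ?_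
  · exact_mod_cast (corrPhase_modEq_two_mul P hε d h).mul_left u
  · simp_rw [← mul_assoc]
    exact hvan _ (hw.mul_right hu)

lemma sum_range_expMod_corrPhase_of_prime_dvd {q R p : ℕ} (hq : q.Prime) (hqR : q.Coprime R)
    (hR : R ≠ 0) (hp : p ≠ 0) (hqp : (q - 1) ∣ (p - 1)) {a d u : ℤ} (b : ℤ)
    (hπ : Function.Bijective fun x : ZMod (q * R) ↦ x ^ p + (a : ZMod (q * R)) * x + b)
    (hd : ¬ (q : ℤ) ∣ d) (hu : IsCoprime u (q * R : ℕ)) :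
    ∑ x ∈ range (q * R), expMod (2 * (q * R))
      (u * corrPhase (permPoly p a b) ((q * R % 2 : ℕ) : ℤ) d x) = 0 := by
  have : Fact q.Prime := ⟨hq⟩
  have ha := intCast_add_one_ne_zero_of_bijective hp hq.one_lt (dvd_mul_right q R) hπ
  have huq : IsCoprime (q : ℤ) u := (hu.of_isCoprime_of_dvd_right (by simp)).symm
  obtain rfl | hq2 := eq_or_ne q 2
  · refine sum_range_expMod_corrPhase_two_mul hp (Nat.coprime_two_left.mp hqR) b ?_
      (Int.not_even_iff_odd.mp fun h ↦ hd (by exact_mod_cast h.two_dvd))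
      (Int.isCoprime_two_left.mp huq) (by simp)
    rw [← ZMod.intCast_eq_zero_iff_even]
    revert ha
    generalize (a : ZMod 2) = x
    decide +revert
  · refine sum_range_expMod_corrPhase_odd_mul (hq.odd_of_ne_two hq2) hqR hR _ huq fun w hw ↦ ?_
    exact sum_range_expMod_corrPhase_prime hq2 hp hqp b _ ha
      (by rwa [Ne, ZMod.intCast_zmod_eq_zero_iff_dvd]) (ZMod.intCast_ne_zero_of_isCoprime hw)

lemma sum_range_expMod_corrPhase_of_not_prime_pow_dvd {p n R : ℕ} [Fact p.Prime] (hp : p ≠ 2)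
    (hn : 2 ≤ n) (hpR : p.Coprime R) (hR : R ≠ 0) {a d u : ℤ} (b : ℤ)
    (ha0 : ¬ a ≡ 0 [ZMOD p]) (ha1 : ¬ a ≡ -1 [ZMOD p]) (hd : ¬ (p ^ n : ℤ) ∣ d)
    (hu : IsCoprime u (p ^ n * R : ℕ)) :
    ∑ x ∈ range (p ^ n * R), expMod (2 * (p ^ n * R))
      (u * corrPhase (permPoly p a b) ((p ^ n * R % 2 : ℕ) : ℤ) d x) = 0 := by
  refine sum_range_expMod_corrPhase_odd_mul (Nat.Prime.odd_of_ne_two Fact.out hp).pow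
    (hpR.pow_left n) hR _ (hu.of_isCoprime_of_dvd_right (by simp)).symm fun w hw ↦ ?_
  exact sum_range_expMod_prime_pow_corrPhase hp hn b _
    (by rwa [Ne, ← Int.cast_zero, ZMod.intCast_eq_intCast_iff])
    (by rwa [Ne, ← eq_neg_iff_add_eq_zero, ← Int.cast_one, ← Int.cast_neg,
      ZMod.intCast_eq_intCast_iff]) hd
    (ZMod.intCast_ne_zero_of_isCoprime (hw.of_isCoprime_of_dvd_left
      (by push_cast; exact dvd_pow_self _ (by omega))))

lemma Nat.prod_dvd_of_pairwise_coprime {ι : Type*} [Fintype ι] {q : ι → ℕ}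
    (hq : Pairwise (Nat.Coprime on q)) {d : ℕ} (h : ∀ i, q i ∣ d) : ∏ i, q i ∣ d := by
  have := Fintype.prod_dvd_of_coprime (s := fun i ↦ (q i : ℤ))
    (fun i j hij ↦ Nat.isCoprime_iff_coprime.mpr (hq hij)) fun i ↦ Int.natCast_dvd_natCast.mpr (h i)
  exact_mod_cast this

lemma Nat.exists_coprime_cofactor_not_dvd {ι : Type*} [Fintype ι] [DecidableEq ι] {q : ι → ℕ}
    (hq : Pairwise (Nat.Coprime on q)) {M d : ℕ} (hM : ∀ i, (q i).Coprime M) (hMd : M ∣ d)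
    (hd : ¬ M * ∏ j, q j ∣ d) : ∃ i R, M * ∏ j, q j = q i * R ∧ (q i).Coprime R ∧ ¬ q i ∣ d := by
  obtain ⟨i, hi⟩ : ∃ i, ¬ q i ∣ d := by
    by_contra! h
    exact hd ((Nat.Coprime.prod_right fun i _ ↦ (hM i).symm).mul_dvd_of_dvd_of_dvd hMd
      (Nat.prod_dvd_of_pairwise_coprime hq h))
  exact ⟨i, M * ∏ j ∈ univ.erase i, q j, by rw [← mul_prod_erase univ q (mem_univ i)]; ring,
    (hM i).mul_right (Nat.Coprime.prod_right fun j hj ↦ hq (ne_of_mem_erase hj).symm), hi⟩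

/-- Theorem 4.1(i): with `p ≥ 3` prime, `n ≥ 2`, `N = p^n·N₁` as in Lemma 3.3, a ZC
sequence `s` of length `N` with root index `u`, and the permutation polynomial
`π(x) = x^p + a·x + b` over `ℤ_N` (`a ≢ 0, −1 (mod p)`), the interleaved sequence `s∘π`
is a CAZAC sequence. -/
theorem stmt_8 (p : ℕ) (hp : p.Prime) (hp3 : 3 ≤ p) (n : ℕ) (hn : 2 ≤ n)
    (N N₁ : ℕ) (hN : N = p ^ n * N₁) (hcop : Nat.Coprime p N₁)
    (r : ℕ) (q : Fin r → ℕ) (hq : ∀ i, (q i).Prime) (hinj : Function.Injective q)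
    (hN₁ : N₁ = ∏ i, q i) (hqdvd : ∀ i, (q i - 1) ∣ (p - 1))
    (a b : ℤ)
    (hPP : Function.Bijective
      (fun x : ZMod N => x ^ p + (a : ZMod N) * x + (b : ZMod N)))
    (ha0 : ¬ a ≡ 0 [ZMOD (p : ℤ)]) (ha1 : ¬ a ≡ -1 [ZMOD (p : ℤ)])
    (u : ℤ) (hu : Int.gcd u (N : ℤ) = 1)
    (s : ℤ → ℂ)
    (hs : ∀ k : ℤ, s k =
      Complex.exp (-(Real.pi : ℂ) * Complex.I * (u : ℂ) *
        ((k : ℂ) ^ 2 + ((N % 2 : ℕ) : ℂ) * (k : ℂ)) / (N : ℂ))) :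
    (∀ k : ℤ, ‖s (k ^ p + a * k + b)‖ = 1) ∧
    ∀ d : ℕ, 0 < d → d < N →
      ∑ k ∈ Finset.range N,
          s ((k : ℤ) ^ p + a * (k : ℤ) + b) *
            (starRingEnd ℂ)
              (s (((k : ℤ) + (d : ℤ)) ^ p + a * ((k : ℤ) + (d : ℤ)) + b)) = 0 := by
  have : Fact p.Prime := ⟨hp⟩
  have hqcop : Pairwise (Nat.Coprime on q) := fun i j hij ↦
    (Nat.coprime_primes (hq i) (hq j)).mpr (hinj.ne hij)
  have hN₁0 : N₁ ≠ 0 := hN₁ ▸ prod_ne_zero_iff.mpr fun i _ ↦ (hq i).ne_zero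
  have hN0 : N ≠ 0 := hN ▸ mul_ne_zero (pow_ne_zero n hp.ne_zero) hN₁0
  refine ⟨fun k ↦ by rw [hs, cexp_zc_eq_expMod hN0, norm_expMod], fun d hd hdN ↦ ?_⟩
  have hterm (k : ℕ) := zc_mul_conj_zc_eq_expMod hN0 hs (permPoly p a b) d k
  simp only [permPoly, eval_add, eval_pow, eval_mul, eval_C, eval_X] at hterm
  rw [sum_congr rfl fun k _ ↦ hterm k]
  have hu' : IsCoprime u N := Int.isCoprime_iff_gcd_eq_one.mpr hu
  by_cases hpd : p ^ n ∣ d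
  · obtain ⟨i, R, hR, hqR, hi⟩ := Nat.exists_coprime_cofactor_not_dvd hqcop
      (fun j ↦ (Nat.Coprime.coprime_dvd_left (hN₁ ▸ dvd_prod_of_mem q (mem_univ j))
        hcop.symm).pow_right n) hpd (hN₁ ▸ hN ▸ fun h ↦ absurd (Nat.le_of_dvd hd h) (by omega))
    rw [hN, hN₁, hR] at hPP hu' ⊢
    exact sum_range_expMod_corrPhase_of_prime_dvd (hq i) hqR
      (right_ne_zero_of_mul (hR ▸ hN₁ ▸ hN ▸ hN0)) hp.ne_zero (hqdvd i) b hPP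
      (by exact_mod_cast hi) hu'
  · subst hN
    exact sum_range_expMod_corrPhase_of_not_prime_pow_dvd (by omega) hn hcop hN₁0 b ha0 ha1
      (by exact_mod_cast hpd) hu'
end

section
/- Let p ≥ 3 be a prime, n ≥ 2 an integer, and N = p^n·N₁, where gcd(p, N₁) = 1 and N₁ is either 1 or a product q₁q₂⋯q_r of distinct primes such that (q_i − 1) divides (p − 1) for every i. Let a, b be integers such that π(x) = x^p + a·x + b is a permutation polynomial over ℤ_N with a ≢ 0 (mod p) and a ≢ −1 (mod p), let σ be the permutation of ℤ/Nℤ induced by π, and let s be the Zadoff–Chu sequence of length N with root index u, where gcd(u, N) = 1. Define y : ℤ/Nℤ → ℂ by y(x) = s(k) for any integer representative k of σ⁻¹(x). Then y is a CAZAC sequence: |y(x)| = 1 for every x, and for every nonzero d ∈ ℤ/Nℤ, Σ_{x ∈ ℤ/Nℤ} y(x)·conj(y(x+d)) = 0. -/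
/-!
Let `σ` be the permutation `x ↦ x ^ p + a x + b` of `ℤ/N` and `D t = σ⁻¹ (σ t + d) - t`, so that
the correlation at shift `d` is `∑ₜ s t · conj (s (t + D t))`. Second differences of `x ^ p` vanish
modulo `N = p ^ n N₁` along steps `c`, `e` with `p ^ (n - 1) ∣ c e` (the binomial theorem for the
`p`-part, `z ^ p ≡ z` for the `N₁`-part), hence `D` has period `P` as soon as `p ^ (n - 1)` divides
every `P · D t`. Also `D t · A ≡ d (mod N)` with `A` prime to `p`, so `D t` has the same `p`-adic
valuation `v` as `d` when `v < n`, and `Q ∤ D t` whenever `Q ∣ N` and `Q ∤ d`.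
With `(P, Q) = (p ^ (n - v - 1) N₁, p ^ (v + 1))`, or `(p ^ n, N₁)` when `p ^ n ∣ d`,
the terms along each progression `t + P m` form a geometric progression whose ratio is a
nontrivial `Q`-th root of unity, so the sum vanishes.
-/

open Complex ComplexConjugate Finset

noncomputable def zadoffChu (N : ℕ) (u k : ℤ) : ℂ :=
  Complex.exp (-(Real.pi : ℂ) * I * (u : ℂ) * ((k : ℂ) ^ 2 + ((N % 2 : ℕ) : ℂ) * (k : ℂ)) / (N : ℂ))

section ZadoffChu

variable {N : ℕ} {u : ℤ}

theorem norm_zadoffChu (k : ℤ) : ‖zadoffChu N u k‖ = 1 := by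
  rw [zadoffChu, show -(Real.pi : ℂ) * I * u * ((k : ℂ) ^ 2 + ((N % 2 : ℕ) : ℂ) * k) / N
      = ((-(Real.pi * u * ((k : ℝ) ^ 2 + ((N % 2 : ℕ) : ℝ) * k) / N) : ℝ) : ℂ) * I by
    push_cast; ring]
  exact norm_exp_ofReal_mul_I _

-- For odd `N` it is the term `(N % 2) * k` that makes the period `N` rather than `2 N`.
theorem zadoffChu_periodic : Function.Periodic (zadoffChu N u) N := by
  intro k
  rcases eq_or_ne N 0 with rfl | hN
  · simp
  obtain ⟨w, hw⟩ : (2 : ℤ) ∣ N + (N % 2 : ℕ) := by omega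
  have hwC : (N : ℂ) + ((N % 2 : ℕ) : ℂ) = 2 * w := by
    have := congrArg (Int.cast : ℤ → ℂ) hw
    push_cast at this
    exact this
  have hNC : (N : ℂ) ≠ 0 := Nat.cast_ne_zero.mpr hN
  rw [zadoffChu, zadoffChu, show -(Real.pi : ℂ) * I * u * (((k + N : ℤ) : ℂ) ^ 2
      + ((N % 2 : ℕ) : ℂ) * ((k + N : ℤ) : ℂ)) / N
      = -(Real.pi : ℂ) * I * u * ((k : ℂ) ^ 2 + ((N % 2 : ℕ) : ℂ) * k) / N
        + ((-(u * (k + w)) : ℤ) : ℂ) * (2 * Real.pi * I) by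
    rw [div_add' _ _ _ hNC, div_left_inj' hNC]
    push_cast
    linear_combination (-(Real.pi : ℂ) * I * u * N) * hwC,
    Complex.exp_add, Complex.exp_int_mul_two_pi_mul_I, mul_one]

theorem zadoffChu_val_intCast [NeZero N] (k : ℤ) :
    zadoffChu N u ((k : ZMod N).val : ℤ) = zadoffChu N u k := by
  rw [ZMod.val_intCast]
  conv_rhs => rw [← Int.emod_add_mul_ediv k N, mul_comm]
  exact (zadoffChu_periodic.int_mul _ _).symm

theorem zadoffChu_mul_conj (j k : ℤ) :
    zadoffChu N u j * conj (zadoffChu N u k) =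
      Complex.exp (Real.pi * I * u * ((k - j) * (k + j + ((N % 2 : ℕ) : ℂ))) / N) := by
  rw [zadoffChu, zadoffChu, ← Complex.exp_conj, ← Complex.exp_add]
  congr 1
  simp only [map_div₀, map_mul, map_add, map_neg, conj_I, map_pow, map_intCast, map_natCast,
    conj_ofReal]
  ring

theorem sum_range_zadoffChu_mul_conj_eq_zero [NeZero N] {P Q : ℕ} (hPQ : P * Q = N)
    (hu : IsCoprime u Q) {e : ℤ} (he : ¬ (Q : ℤ) ∣ e) (r : ℤ) :
    ∑ m ∈ range Q, zadoffChu N u (r + P * m) * conj (zadoffChu N u (r + P * m + e)) = 0 := by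
  subst hPQ
  have hP : (P : ℂ) ≠ 0 := Nat.cast_ne_zero.mpr (left_ne_zero_of_mul (NeZero.ne (P * Q)))
  have hQ : Q ≠ 0 := right_ne_zero_of_mul (NeZero.ne (P * Q))
  have hQC : (Q : ℂ) ≠ 0 := Nat.cast_ne_zero.mpr hQ
  have hω := Complex.isPrimitiveRoot_exp Q hQ
  set ζ := Complex.exp (2 * Real.pi * I / Q) ^ (u * e)
  have hζ : ζ ≠ 1 := fun h => he (hu.symm.dvd_of_dvd_mul_left ((hω.zpow_eq_one_iff_dvd _).mp h))
  have hζQ : ζ ^ Q = 1 := by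
    rw [← zpow_natCast, ← zpow_mul, mul_comm (u * e), zpow_mul, zpow_natCast, hω.pow_eq_one,
      one_zpow]
  have hterm : ∀ m : ℕ,
      zadoffChu (P * Q) u (r + P * m) * conj (zadoffChu (P * Q) u (r + P * m + e)) =
        Complex.exp (Real.pi * I * u * (e * (2 * r + e + (((P * Q) % 2 : ℕ) : ℂ))) / (P * Q : ℕ)) *
        ζ ^ m := by
    intro m
    rw [zadoffChu_mul_conj, ← zpow_natCast, ← zpow_mul, ← Complex.exp_int_mul, ← Complex.exp_add]
    congr 1
    push_cast
    field_simp
    ring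
  rw [sum_congr rfl fun m _ => hterm m, ← mul_sum, geom_sum_eq hζ, hζQ, sub_self, zero_div,
    mul_zero]

end ZadoffChu

theorem sum_eq_zero_of_sum_range_add_nsmul_eq_zero {G K : Type*} [AddCommGroup G] [Fintype G]
    [Field K] [CharZero K] {W : G → K} (g : G) {Q : ℕ} (hQ : Q ≠ 0)
    (h : ∀ t, ∑ m ∈ range Q, W (t + m • g) = 0) : ∑ t, W t = 0 := by
  have hshift (m : ℕ) : ∑ t, W (t + m • g) = ∑ t, W t := Equiv.sum_comp (Equiv.addRight _) W
  have : (Q : K) * ∑ t, W t = 0 :=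
    calc (Q : K) * ∑ t, W t = ∑ m ∈ range Q, ∑ t, W (t + m • g) := by
          simp only [hshift, sum_const, card_range, nsmul_eq_mul]
      _ = ∑ t, ∑ m ∈ range Q, W (t + m • g) := sum_comm
      _ = 0 := sum_eq_zero fun t _ => h t
  simpa [hQ] using this

theorem sum_zadoffChu_mul_conj_add_eq_zero {N : ℕ} [NeZero N] {u : ℤ} {P Q : ℕ}
    (hPQ : P * Q = N) (hu : IsCoprime u Q) {D : ZMod N → ZMod N}
    (hD : Function.Periodic D P) (hQ : ∀ t, ¬ Q ∣ (D t).val) :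
    ∑ t : ZMod N, zadoffChu N u (t.val : ℤ) * conj (zadoffChu N u ((t + D t).val : ℤ)) = 0 := by
  have hQ0 : Q ≠ 0 := by
    rintro rfl
    exact NeZero.ne N (by rw [← hPQ, mul_zero])
  refine sum_eq_zero_of_sum_range_add_nsmul_eq_zero (P : ZMod N) hQ0 fun t => ?_
  have hcast : ∀ m : ℕ, t + m • (P : ZMod N) = ((t.val + P * m : ℤ) : ZMod N) := fun m => by
    push_cast
    rw [ZMod.natCast_zmod_val, nsmul_eq_mul, mul_comm]
  rw [← sum_range_zadoffChu_mul_conj_eq_zero hPQ hu (e := (D t).val)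
    (by exact_mod_cast hQ t) t.val]
  refine sum_congr rfl fun m _ => ?_
  rw [hD.nsmul m t, hcast, ← zadoffChu_val_intCast (t.val + P * m : ℤ),
    ← zadoffChu_val_intCast (t.val + P * m + (D t).val : ℤ)]
  push_cast
  simp only [ZMod.natCast_zmod_val]

section Displacement

variable {G : Type*} [AddCommGroup G] (σ : G ≃ G) (d : G)

def displacement (t : G) : G := σ.symm (σ t + d) - t

theorem apply_add_displacement (t : G) : σ (t + displacement σ d t) = σ t + d := by
  simp [displacement]

theorem displacement_add_of_sub_eq {t g : G}
    (h : σ (t + g + displacement σ d t) - σ (t + g) = σ (t + displacement σ d t) - σ t) :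
    displacement σ d (t + g) = displacement σ d t := by
  rw [apply_add_displacement, add_sub_cancel_left] at h
  rw [displacement, ← eq_add_of_sub_eq' h, σ.symm_apply_apply]
  abel

theorem sum_symm_symm_add_eq [Fintype G] {M : Type*} [AddCommMonoid M] (φ : G → G → M) :
    ∑ x, φ (σ.symm x) (σ.symm (x + d)) = ∑ t, φ t (t + displacement σ d t) := by
  rw [← σ.sum_comp]
  simp [displacement]

end Displacement

theorem prime_dvd_pow_sub_self_of_sub_one_dvd {p q : ℕ} (hq : q.Prime) (hp : p ≠ 0)
    (h : q - 1 ∣ p - 1) (z : ℤ) : (q : ℤ) ∣ z ^ p - z := by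
  have := Fact.mk hq
  rw [← ZMod.intCast_zmod_eq_zero_iff_dvd, Int.cast_sub, Int.cast_pow, sub_eq_zero]
  obtain ⟨k, hk⟩ := h
  rcases eq_or_ne (z : ZMod q) 0 with hz | hz
  · rw [hz, zero_pow hp]
  · rw [show p = (q - 1) * k + 1 by have := hq.two_le; omega, pow_succ, pow_mul,
      ZMod.pow_card_sub_one_eq_one hz, one_pow, one_mul]

theorem prod_primes_dvd_pow_sub_self {ι : Type*} [Fintype ι] {p : ℕ} {q : ι → ℕ}
    (hq : ∀ i, (q i).Prime) (hinj : Function.Injective q) (hp : p ≠ 0)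
    (h : ∀ i, q i - 1 ∣ p - 1) (z : ℤ) : ((∏ i, q i : ℕ) : ℤ) ∣ z ^ p - z := by
  push_cast
  refine Fintype.prod_dvd_of_coprime (fun i j hij => ?_) fun i =>
    prime_dvd_pow_sub_self_of_sub_one_dvd (hq i) hp (h i) z
  exact Nat.isCoprime_iff_coprime.mpr ((Nat.coprime_primes (hq i) (hq j)).mpr (hinj.ne hij))

theorem prime_mul_mul_dvd_pow_second_difference {p : ℕ} (hp : p.Prime) (t c e : ℤ) :
    (p : ℤ) * (c * e) ∣ (t + c + e) ^ p - (t + c) ^ p - ((t + e) ^ p - t ^ p) := by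
  have hsum : (t + c + e) ^ p - (t + c) ^ p - ((t + e) ^ p - t ^ p)
      = ∑ k ∈ range p, ((t + c) ^ k - t ^ k) * e ^ (p - k) * p.choose k := by
    rw [add_pow, add_pow t e, sum_range_succ, sum_range_succ]
    simp only [Nat.sub_self, pow_zero, Nat.choose_self, Nat.cast_one, mul_one, sub_mul,
      sum_sub_distrib]
    ring
  rw [hsum, mul_comm]
  refine dvd_sum fun k hk => ?_
  rcases Nat.eq_zero_or_pos k with rfl | hk0
  · simp
  have hkp := mem_range.mp hk
  refine mul_dvd_mul (mul_dvd_mul ?_ (dvd_pow_self e (by omega))) ?_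
  · simpa using sub_dvd_pow_sub_pow (t + c) t k
  · exact Int.natCast_dvd_natCast.mpr (hp.dvd_choose_self hk0.ne' hkp)

theorem pow_second_difference_eq {p n N₁ : ℕ} (hp : p.Prime) (hcop : p.Coprime N₁)
    (hN₁ : ∀ z : ℤ, (N₁ : ℤ) ∣ z ^ p - z) {c e : ℕ} (hce : p ^ (n - 1) ∣ c * e)
    (x : ZMod (p ^ n * N₁)) : (x + c + e) ^ p - (x + c) ^ p = (x + e) ^ p - x ^ p := by
  obtain ⟨t, rfl⟩ := ZMod.intCast_surjective x
  have hpn : (p : ℤ) ^ n ∣ (t + c + e) ^ p - (t + c) ^ p - ((t + e) ^ p - t ^ p) :=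
    calc (p : ℤ) ^ n ∣ (p : ℤ) ^ (n - 1) * p := by
          rw [← pow_succ]; exact pow_dvd_pow _ (by omega)
      _ ∣ (c * e : ℤ) * p := mul_dvd_mul_right (by exact_mod_cast hce) _
      _ ∣ _ := by rw [mul_comm]; exact prime_mul_mul_dvd_pow_second_difference hp _ _ _
  have hN₁' : (N₁ : ℤ) ∣ (t + c + e) ^ p - (t + c) ^ p - ((t + e) ^ p - t ^ p) := by
    rw [show (t + c + e) ^ p - (t + c) ^ p - ((t + e) ^ p - t ^ p)
      = ((t + c + e) ^ p - (t + c + e) - ((t + c) ^ p - (t + c)))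
        - (((t + e) ^ p - (t + e)) - (t ^ p - t)) by ring]
    exact dvd_sub (dvd_sub (hN₁ _) (hN₁ _)) (dvd_sub (hN₁ _) (hN₁ _))
  have hcopZ : IsCoprime ((p : ℤ) ^ n) N₁ := (Nat.isCoprime_iff_coprime.mpr hcop).pow_left
  have h := (ZMod.intCast_zmod_eq_zero_iff_dvd _ (p ^ n * N₁)).mpr
    (by push_cast; exact hcopZ.mul_dvd hpn hN₁')
  push_cast at h
  linear_combination h

def diffQuotient (p : ℕ) (a x e : ℤ) : ℤ := ∑ i ∈ range p, (x + e) ^ i * x ^ (p - 1 - i) + a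

theorem add_pow_sub_pow_eq_mul_diffQuotient (p : ℕ) (a x e : ℤ) :
    (x + e) ^ p + a * (x + e) - (x ^ p + a * x) = e * diffQuotient p a x e := by
  rw [diffQuotient]
  linear_combination -(geom_sum₂_mul (x + e) x p)

-- Modulo `p`, the difference quotient is `a` when `p ∣ e` and `a + 1` otherwise.
theorem prime_not_dvd_diffQuotient {p : ℕ} (hp : p.Prime) {a : ℤ} (ha0 : (a : ZMod p) ≠ 0)
    (ha1 : (a : ZMod p) + 1 ≠ 0) (x e : ℤ) : ¬ (p : ℤ) ∣ diffQuotient p a x e := by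
  have := Fact.mk hp
  rw [← ZMod.intCast_zmod_eq_zero_iff_dvd]
  by_cases he : (e : ZMod p) = 0
  · simp only [diffQuotient, Int.cast_add, Int.cast_sum, Int.cast_mul, Int.cast_pow, he, add_zero,
      geom_sum₂_self, ZMod.natCast_self, zero_mul, zero_add]
    exact ha0
  · have h := congrArg (Int.cast : ℤ → ZMod p) (add_pow_sub_pow_eq_mul_diffQuotient p a x e)
    push_cast at h
    rw [add_pow_char, ZMod.pow_card, ZMod.pow_card] at h
    intro hA
    apply ha1
    rw [hA, mul_zero] at h
    exact (mul_eq_zero.mp (show (e : ZMod p) * (a + 1) = 0 by linear_combination h)).resolve_left he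

theorem pow_dvd_iff_of_dvd_mul_sub {p A D M : ℤ} (hp : Prime p) (hA : ¬ p ∣ A) {n k : ℕ}
    (hk : k ≤ n) (h : p ^ n ∣ D * A - M) : p ^ k ∣ D ↔ p ^ k ∣ M := by
  have hk' : p ^ k ∣ D * A - M := (pow_dvd_pow p hk).trans h
  have hcop : IsCoprime (p ^ k) A := (hp.coprime_iff_not_dvd.mpr hA).pow_left
  exact ⟨fun hD => (dvd_sub_right (hD.mul_right A)).mp hk',
    fun hM => hcop.dvd_of_dvd_mul_right ((dvd_sub_left hM).mp hk')⟩

section PermutationPolynomial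

variable {p : ℕ} {a b : ℤ}

theorem displacement_periodic {n N₁ : ℕ} [NeZero (p ^ n * N₁)] (hp : p.Prime)
    (hcop : p.Coprime N₁) (hN₁ : ∀ z : ℤ, (N₁ : ℤ) ∣ z ^ p - z)
    {σ : ZMod (p ^ n * N₁) ≃ ZMod (p ^ n * N₁)} (hσ : ∀ x, σ x = x ^ p + a * x + b)
    {d : ZMod (p ^ n * N₁)} {P : ℕ} (hP : ∀ t, p ^ (n - 1) ∣ P * (displacement σ d t).val) :
    Function.Periodic (displacement σ d) P := by
  intro t
  apply displacement_add_of_sub_eq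
  have h := pow_second_difference_eq hp hcop hN₁ (hP t) t
  rw [ZMod.natCast_zmod_val] at h
  simp only [hσ]
  linear_combination h

theorem dvd_displacement_val_mul_diffQuotient_sub {M : ℕ} [NeZero M] {σ : ZMod M ≃ ZMod M}
    (hσ : ∀ x, σ x = x ^ p + a * x + b) (d t : ZMod M) :
    (M : ℤ) ∣ (displacement σ d t).val * diffQuotient p a t.val (displacement σ d t).val
      - d.val := by
  rw [← ZMod.intCast_eq_intCast_iff_dvd_sub, ← add_pow_sub_pow_eq_mul_diffQuotient]
  have h := apply_add_displacement σ d t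
  simp only [hσ] at h
  push_cast
  simp only [ZMod.natCast_zmod_val]
  linear_combination -h

theorem pow_dvd_displacement_val_iff {n N₁ : ℕ} [NeZero (p ^ n * N₁)] (hp : p.Prime)
    (ha0 : (a : ZMod p) ≠ 0) (ha1 : (a : ZMod p) + 1 ≠ 0)
    {σ : ZMod (p ^ n * N₁) ≃ ZMod (p ^ n * N₁)} (hσ : ∀ x, σ x = x ^ p + a * x + b)
    (d t : ZMod (p ^ n * N₁)) {k : ℕ} (hk : k ≤ n) :
    p ^ k ∣ (displacement σ d t).val ↔ p ^ k ∣ d.val := by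
  have h := dvd_displacement_val_mul_diffQuotient_sub hσ d t
  push_cast at h
  have := pow_dvd_iff_of_dvd_mul_sub (Nat.prime_iff_prime_int.mp hp)
    (prime_not_dvd_diffQuotient hp ha0 ha1 _ _) hk ((dvd_mul_right _ _).trans h)
  exact_mod_cast this

theorem sum_zadoffChu_mul_conj_displacement_eq_zero {n N₁ : ℕ} [NeZero (p ^ n * N₁)]
    (hp : p.Prime) (hcop : p.Coprime N₁) (hN₁ : ∀ z : ℤ, (N₁ : ℤ) ∣ z ^ p - z)
    {σ : ZMod (p ^ n * N₁) ≃ ZMod (p ^ n * N₁)} (hσ : ∀ x, σ x = x ^ p + a * x + b)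
    {u : ℤ} (hu : IsCoprime u (p ^ n * N₁ : ℕ)) {d : ZMod (p ^ n * N₁)} {P Q : ℕ}
    (hPQ : P * Q = p ^ n * N₁) (hQ : ¬ Q ∣ d.val)
    (hP : ∀ t, p ^ (n - 1) ∣ P * (displacement σ d t).val) :
    ∑ t, zadoffChu (p ^ n * N₁) u (t.val : ℤ)
      * conj (zadoffChu (p ^ n * N₁) u ((t + displacement σ d t).val : ℤ)) = 0 := by
  rw [← hPQ, Nat.cast_mul] at hu
  refine sum_zadoffChu_mul_conj_add_eq_zero hPQ hu.of_mul_right_right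
    (displacement_periodic hp hcop hN₁ hσ hP) fun t hQt => hQ ?_
  have hQM : (Q : ℤ) ∣ (p ^ n * N₁ : ℕ) := Int.natCast_dvd_natCast.mpr (Dvd.intro_left P hPQ)
  have := (dvd_sub_right ((Int.natCast_dvd_natCast.mpr hQt).mul_right _)).mp
    (hQM.trans (dvd_displacement_val_mul_diffQuotient_sub hσ d t))
  exact_mod_cast this

end PermutationPolynomial

theorem stmt_9_general (p : ℕ) (hp : p.Prime) (n : ℕ)
    (N N₁ : ℕ) [NeZero N] (hN : N = p ^ n * N₁) (hcop : Nat.Coprime p N₁)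
    (r : ℕ) (q : Fin r → ℕ) (hq : ∀ i, (q i).Prime) (hinj : Function.Injective q)
    (hN₁ : N₁ = ∏ i, q i) (hqdvd : ∀ i, (q i - 1) ∣ (p - 1))
    (a b : ℤ)
    (f : ZMod N → ZMod N)
    (hf : ∀ x, f x = x ^ p + (a : ZMod N) * x + (b : ZMod N))
    (hbij : Function.Bijective f)
    (ha0 : ¬ a ≡ 0 [ZMOD (p : ℤ)]) (ha1 : ¬ a ≡ -1 [ZMOD (p : ℤ)])
    (u : ℤ) (hu : Int.gcd u (N : ℤ) = 1)
    (s : ℤ → ℂ)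
    (hs : ∀ k : ℤ, s k =
      Complex.exp (-(Real.pi : ℂ) * Complex.I * (u : ℂ) *
        ((k : ℂ) ^ 2 + ((N % 2 : ℕ) : ℂ) * (k : ℂ)) / (N : ℂ)))
    (y : ZMod N → ℂ)
    (hy : ∀ x : ZMod N,
      y x = s (((((Equiv.ofBijective f hbij).symm x).val : ℕ) : ℤ))) :
    (∀ x : ZMod N, ‖y x‖ = 1) ∧
    ∀ d : ZMod N, d ≠ 0 →
      ∑ x : ZMod N, y x * (starRingEnd ℂ) (y (x + d)) = 0 := by
  subst hN
  have := Fact.mk hp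
  obtain rfl : s = zadoffChu (p ^ n * N₁) u := funext hs
  set σ := Equiv.ofBijective f hbij
  have hσ : ∀ x, σ x = x ^ p + a * x + b := hf
  have hN₁z : ∀ z : ℤ, (N₁ : ℤ) ∣ z ^ p - z := by
    rw [hN₁]; exact prod_primes_dvd_pow_sub_self hq hinj hp.ne_zero hqdvd
  have hu' : IsCoprime u (p ^ n * N₁ : ℕ) := Int.isCoprime_iff_gcd_eq_one.mpr hu
  have ha0' : (a : ZMod p) ≠ 0 := by rwa [← Int.cast_zero, Ne, ZMod.intCast_eq_intCast_iff]
  have ha1' : (a : ZMod p) + 1 ≠ 0 := by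
    rwa [← sub_neg_eq_add, sub_ne_zero, ← Int.cast_one, ← Int.cast_neg, Ne,
      ZMod.intCast_eq_intCast_iff]
  refine ⟨fun x => hy x ▸ norm_zadoffChu _, fun d hd => ?_⟩
  simp only [hy]
  refine (sum_symm_symm_add_eq σ d fun t t' : ZMod (p ^ n * N₁) =>
    zadoffChu _ u (t.val : ℤ) * conj (zadoffChu _ u (t'.val : ℤ))).trans ?_
  have hd0 : d.val ≠ 0 := (ZMod.val_ne_zero d).mpr hd
  by_cases hpd : p ^ n ∣ d.val
  · refine sum_zadoffChu_mul_conj_displacement_eq_zero hp hcop hN₁z hσ hu' rfl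
      (fun hN₁d => hd0 ?_) fun t => (pow_dvd_pow p (n.sub_le 1)).mul_right _
    exact Nat.eq_zero_of_dvd_of_lt ((hcop.pow_left n).mul_dvd_of_dvd_of_dvd hpd hN₁d) d.val_lt
  · set v := padicValNat p d.val
    have hv : v < n := lt_of_not_ge fun h => hpd ((pow_dvd_pow p h).trans pow_padicValNat_dvd)
    refine sum_zadoffChu_mul_conj_displacement_eq_zero hp hcop hN₁z hσ hu'
      (P := p ^ (n - v - 1) * N₁) (Q := p ^ (v + 1)) ?_ (pow_succ_padicValNat_not_dvd hd0)
      fun t => ?_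
    · rw [mul_right_comm, ← pow_add, show n - v - 1 + (v + 1) = n by omega]
    · rw [show n - 1 = n - v - 1 + v by omega, pow_add]
      exact mul_dvd_mul (dvd_mul_right _ _)
        ((pow_dvd_displacement_val_iff hp ha0' ha1' hσ d t hv.le).mpr pow_padicValNat_dvd)

/-- Theorem 4.1(ii): with the setting of Theorem 4.1, the sequence `s∘π⁻¹`, obtained by
interleaving the ZC sequence `s` with the inverse of the permutation `σ` of `ℤ/Nℤ`
induced by `π(x) = x^p + a·x + b`, is a CAZAC sequence. -/
theorem stmt_9 (p : ℕ) (hp : p.Prime) (hp3 : 3 ≤ p) (n : ℕ) (hn : 2 ≤ n)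
    (N N₁ : ℕ) [NeZero N] (hN : N = p ^ n * N₁) (hcop : Nat.Coprime p N₁)
    (r : ℕ) (q : Fin r → ℕ) (hq : ∀ i, (q i).Prime) (hinj : Function.Injective q)
    (hN₁ : N₁ = ∏ i, q i) (hqdvd : ∀ i, (q i - 1) ∣ (p - 1))
    (a b : ℤ)
    (f : ZMod N → ZMod N)
    (hf : ∀ x, f x = x ^ p + (a : ZMod N) * x + (b : ZMod N))
    (hbij : Function.Bijective f)
    (ha0 : ¬ a ≡ 0 [ZMOD (p : ℤ)]) (ha1 : ¬ a ≡ -1 [ZMOD (p : ℤ)])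
    (u : ℤ) (hu : Int.gcd u (N : ℤ) = 1)
    (s : ℤ → ℂ)
    (hs : ∀ k : ℤ, s k =
      Complex.exp (-(Real.pi : ℂ) * Complex.I * (u : ℂ) *
        ((k : ℂ) ^ 2 + ((N % 2 : ℕ) : ℂ) * (k : ℂ)) / (N : ℂ)))
    (y : ZMod N → ℂ)
    (hy : ∀ x : ZMod N,
      y x = s (((((Equiv.ofBijective f hbij).symm x).val : ℕ) : ℤ))) :
    (∀ x : ZMod N, ‖y x‖ = 1) ∧
    ∀ d : ZMod N, d ≠ 0 →
      ∑ x : ZMod N, y x * (starRingEnd ℂ) (y (x + d)) = 0 :=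
  stmt_9_general p hp n N N₁ hN hcop r q hq hinj hN₁ hqdvd a b f hf hbij ha0 ha1 u hu s hs y hy
end

section
/- Let N = 2^n with n ≥ 2, and let π be a polynomial with integer coefficients, with constant term π(0) = 0, that is a permutation polynomial over ℤ_{2^n}. Fix an integer d with 0 < d < N and let g = gcd(d, N). For k ∈ ℤ define H_d(k) = (π(k+d)² − π(k)² − π(d)²)/2. Then: (a) π(k+d)² − π(k)² − π(d)² is even, so H_d(k) is an integer for every k; (b) g divides H_d(k) for every integer k; and (c) the N/g integers H_d(0)/g, H_d(1)/g, …, H_d(N/g − 1)/g are pairwise incongruent modulo N/g, i.e., they form a complete residue system modulo N/g (so H_d(k)/g induces a permutation of ℤ/(N/g)ℤ). -/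
/-!
Reducing modulo `2 ^ m` for `m ≤ n`, `π` permutes every `ℤ/2^m`. Hence, for `c` odd,
`π (x + 2^r c) - π x` is `2^r` times an odd number; moreover `π'` is odd and `π''` is even, and
together these make the second difference `π (x + e + D) - π (x + e) - π (x + D) + π x`
divisible by `2^(s+t+1)` whenever `2^t ∣ D` and `2^s ∣ e`.

Write `d = 2^t c` with `c` odd, so that `g = 2^t`, and put
`F x = π (x + d)^2 - π x^2 = 2 H_d x + π d^2`. If `j - i = 2^s m` with `m` odd, expanding the
squares with the facts above gives `F j - F i = 2^(s+t+1) · odd`. So `F j ≢ F i [ZMOD 2^(n+1)]`,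
i.e. `H_d j / g ≢ H_d i / g` modulo `N / g = 2^(n-t)`, as soon as `0 < j - i < 2^(n-t)`.
-/

open Polynomial

theorem Polynomial.exists_eval_add_eq {R : Type*} [CommRing R] (f : R[X]) (e : R) :
    ∃ q : R[X], ∀ x,
      f.eval (x + e) = f.eval x + f.derivative.eval x * e + q.eval x * e ^ 2 := by
  obtain ⟨q, hq⟩ := binomExpansion (f.map C) X (C e)
  refine ⟨q, fun x => ?_⟩
  have := congrArg (eval x) hq
  simp only [derivative_map, eval_map, eval₂_C_X] at this
  change eval x (f.comp (X + C e)) = _ at this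
  simpa [eval_comp] using this

theorem Polynomial.two_dvd_eval_derivative_derivative (f : ℤ[X]) (x : ℤ) :
    2 ∣ f.derivative.derivative.eval x := by
  have h := congrFun (factorial_smul_hasseDeriv (R := ℤ) 2) f
  simp only [Nat.factorial_two, LinearMap.smul_apply, Function.iterate_succ, Function.iterate_zero,
    Function.comp_apply, id] at h
  rw [← h, eval_smul, nsmul_eq_mul]
  exact dvd_mul_right _ _

def IsPermPoly (π : ℤ[X]) (N : ℕ) : Prop :=
  Function.Bijective fun x : ZMod N => (π.map (Int.castRingHom (ZMod N))).eval x

namespace IsPermPoly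

variable {π : ℤ[X]} {m N : ℕ}

theorem eval_intCast (x : ℤ) :
    (π.map (Int.castRingHom (ZMod N))).eval (x : ZMod N) = ((π.eval x : ℤ) : ZMod N) := by
  simp [eval_intCast_map]

theorem of_dvd [NeZero N] (h : IsPermPoly π N) (hmN : m ∣ N) : IsPermPoly π m := by
  have : NeZero m := ⟨fun hm => NeZero.ne N (Nat.eq_zero_of_zero_dvd (hm ▸ hmN))⟩
  refine Finite.surjective_iff_bijective.mp fun w => ?_
  obtain ⟨w, rfl⟩ := ZMod.intCast_surjective w
  obtain ⟨z, hz⟩ := h.surjective w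
  obtain ⟨z, rfl⟩ := ZMod.intCast_surjective z
  refine ⟨z, ?_⟩
  simp only [eval_intCast, ZMod.intCast_eq_intCast_iff_dvd_sub] at hz ⊢
  exact (Int.natCast_dvd_natCast.mpr hmN).trans hz

theorem dvd_sub_of_dvd_eval_sub (h : IsPermPoly π m) {x y : ℤ}
    (hxy : (m : ℤ) ∣ π.eval x - π.eval y) : (m : ℤ) ∣ x - y := by
  have : (y : ZMod m) = x :=
    h.injective (by simpa only [eval_intCast, ZMod.intCast_eq_intCast_iff_dvd_sub])
  rwa [ZMod.intCast_eq_intCast_iff_dvd_sub] at this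

section TwoPow

variable {n : ℕ} (hπ : IsPermPoly π (2 ^ n))
include hπ

theorem two_pow_dvd_sub_of_dvd_eval_sub {m : ℕ} (hm : m ≤ n) {x y : ℤ}
    (hxy : 2 ^ m ∣ π.eval x - π.eval y) : (2 : ℤ) ^ m ∣ x - y := by
  have := (hπ.of_dvd (pow_dvd_pow 2 hm)).dvd_sub_of_dvd_eval_sub (x := x) (y := y)
  exact_mod_cast this (by exact_mod_cast hxy)

theorem two_pow_succ_dvd_eval_add_sub {r : ℕ} (hr : r < n) (x c : ℤ) :
    2 ^ (r + 1) ∣ π.eval (x + 2 ^ r * c) - π.eval x - 2 ^ r * c := by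
  obtain ⟨w, hw⟩ : 2 ^ r * c ∣ π.eval (x + 2 ^ r * c) - π.eval x := by
    simpa using sub_dvd_eval_sub (x + 2 ^ r * c) x π
  -- if `c` is odd, injectivity modulo `2 ^ (r + 1)` forces `w` to be odd
  obtain ⟨v, hv⟩ : 2 ∣ c * (w - 1) := by
    rw [← even_iff_two_dvd, Int.even_mul, Int.even_sub_one]
    by_contra! hcw
    obtain ⟨w', rfl⟩ := hcw.2
    have h := hπ.two_pow_dvd_sub_of_dvd_eval_sub (m := r + 1) hr (x := x + 2 ^ r * c) (y := x)
      ⟨c * w', by rw [hw]; ring⟩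
    rw [add_sub_cancel_left, pow_succ] at h
    exact hcw.1 (even_iff_two_dvd.mpr (Int.dvd_of_mul_dvd_mul_left (by positivity) h))
  exact ⟨v, by linear_combination hw + 2 ^ r * hv⟩

theorem exists_odd_eval_add_two_pow_mul {r : ℕ} (hr : r < n) {c : ℤ} (hc : Odd c)
    (x : ℤ) : ∃ a, Odd a ∧ π.eval (x + 2 ^ r * c) = π.eval x + 2 ^ r * a := by
  obtain ⟨z, hz⟩ := hπ.two_pow_succ_dvd_eval_add_sub hr x c
  exact ⟨c + 2 * z, hc.add_even (even_two_mul z), by linear_combination hz⟩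

theorem odd_eval_derivative (hn : 2 ≤ n) (x : ℤ) : Odd (π.derivative.eval x) := by
  obtain ⟨q, hq⟩ := π.exists_eval_add_eq 2
  by_contra! h
  obtain ⟨b, hb⟩ := Int.not_odd_iff_even.mp h
  have h4 := hπ.two_pow_dvd_sub_of_dvd_eval_sub hn (x := x + 2) (y := x)
    ⟨b + q.eval x, by rw [hq, hb]; ring⟩
  norm_num at h4

theorem two_pow_succ_dvd_eval_derivative_add_sub (hn : 2 ≤ n) {t : ℕ} {D : ℤ}
    (hD : 2 ^ t ∣ D) (x : ℤ) :
    2 ^ (t + 1) ∣ π.derivative.eval (x + D) - π.derivative.eval x := by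
  rcases Nat.eq_zero_or_pos t with rfl | ht
  · exact even_iff_two_dvd.mp
      ((hπ.odd_eval_derivative hn (x + D)).sub_odd (hπ.odd_eval_derivative hn x))
  · obtain ⟨q, hq⟩ := π.derivative.exists_eval_add_eq D
    rw [hq, add_assoc, add_sub_cancel_left]
    refine dvd_add ?_ (dvd_mul_of_dvd_right ?_ _)
    · rw [pow_succ']
      exact mul_dvd_mul (π.two_dvd_eval_derivative_derivative x) hD
    · have hD2 := pow_dvd_pow_of_dvd hD 2
      rw [← pow_mul] at hD2
      exact (pow_dvd_pow 2 (by omega)).trans hD2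

theorem two_pow_dvd_eval_add_add_sub {s t : ℕ} (hst : s + t < n) {D e : ℤ}
    (hD : 2 ^ t ∣ D) (he : 2 ^ s ∣ e) (x : ℤ) :
    2 ^ (s + t + 1) ∣ π.eval (x + e + D) - π.eval (x + e) - (π.eval (x + D) - π.eval x) := by
  obtain ⟨c, rfl⟩ := hD
  rcases Nat.eq_zero_or_pos s with rfl | hs
  · have := dvd_sub (hπ.two_pow_succ_dvd_eval_add_sub (by omega) (x + e) c)
      (hπ.two_pow_succ_dvd_eval_add_sub (by omega) x c)
    simpa [sub_sub_sub_cancel_right] using this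
  · obtain ⟨q, hq⟩ := π.exists_eval_add_eq e
    set A := x + 2 ^ t * c
    have hsplit : π.eval (x + e + 2 ^ t * c) - π.eval (x + e) - (π.eval A - π.eval x) =
        (π.derivative.eval A - π.derivative.eval x) * e + (q.eval A - q.eval x) * e ^ 2 := by
      rw [add_right_comm, hq, hq]
      ring
    rw [hsplit]
    refine dvd_add ?_ ?_
    · rw [show s + t + 1 = t + 1 + s by omega, pow_add]
      exact mul_dvd_mul (hπ.two_pow_succ_dvd_eval_derivative_add_sub (by omega) ⟨c, rfl⟩ x) he
    · have hqA : 2 ^ t ∣ q.eval A - q.eval x :=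
        (dvd_mul_right _ c).trans (by simpa [A] using sub_dvd_eval_sub A x q)
      have he2 := pow_dvd_pow_of_dvd he 2
      rw [← pow_mul] at he2
      have h := mul_dvd_mul hqA he2
      rw [← pow_add] at h
      exact (pow_dvd_pow 2 (by omega)).trans h

theorem two_pow_succ_dvd_eval_sq_sub (hπ0 : π.eval 0 = 0) {t : ℕ} (ht : t < n)
    {c : ℤ} (hc : Odd c) (k : ℤ) :
    2 ^ (t + 1) ∣ π.eval (k + 2 ^ t * c) ^ 2 - π.eval k ^ 2 - π.eval (2 ^ t * c) ^ 2 := by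
  obtain ⟨a, ha, hak⟩ := hπ.exists_odd_eval_add_two_pow_mul ht hc k
  obtain ⟨p, hp, hp0⟩ := hπ.exists_odd_eval_add_two_pow_mul ht hc 0
  rw [zero_add, hπ0, zero_add] at hp0
  obtain ⟨b, hb⟩ := even_iff_two_dvd.mp (ha.sub_odd hp)
  rw [hak, hp0]
  exact ⟨a * π.eval k + 2 ^ t * b * (a + p), by linear_combination (2 ^ t) ^ 2 * (a + p) * hb⟩

theorem exists_odd_eval_sq_sub {s t : ℕ} (hst : s + t < n) {c m : ℤ} (hc : Odd c)
    (hm : Odd m) (x : ℤ) : ∃ K, Odd K ∧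
      (π.eval (x + 2 ^ s * m + 2 ^ t * c) ^ 2 - π.eval (x + 2 ^ s * m) ^ 2) -
        (π.eval (x + 2 ^ t * c) ^ 2 - π.eval x ^ 2) = 2 ^ (s + t + 1) * K := by
  obtain ⟨a, ha, hD⟩ := hπ.exists_odd_eval_add_two_pow_mul (r := t) (by omega) hc x
  obtain ⟨u, hu, he⟩ := hπ.exists_odd_eval_add_two_pow_mul (r := s) (by omega) hm x
  obtain ⟨w, hw⟩ := hπ.two_pow_dvd_eval_add_add_sub hst ⟨c, rfl⟩ ⟨m, rfl⟩ x
  refine ⟨a * u + 2 * w * (π.eval x + 2 ^ s * u + 2 ^ t * a + 2 ^ (s + t) * w),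
    (ha.mul hu).add_even (even_two_mul _ |>.mul_right _), ?_⟩
  -- with `P = π x`, the four values are `P`, `P + 2^t a`, `P + 2^s u` and
  -- `P + 2^s u + 2^t a + 2^(s+t+1) w`
  rw [hD, he] at hw ⊢
  rw [show π.eval (x + 2 ^ s * m + 2 ^ t * c) =
      π.eval x + 2 ^ s * u + 2 ^ t * a + 2 ^ (s + t + 1) * w by linear_combination hw]
  ring

theorem not_two_pow_succ_dvd_eval_sq_sub {t : ℕ} {c : ℤ} (hc : Odd c) {i j : ℤ}
    (hij : i < j) (hji : j - i < 2 ^ (n - t)) :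
    ¬ 2 ^ (n + 1) ∣ (π.eval (j + 2 ^ t * c) ^ 2 - π.eval j ^ 2) -
        (π.eval (i + 2 ^ t * c) ^ 2 - π.eval i ^ 2) := by
  obtain ⟨s, m, hm, hsm⟩ := Nat.exists_eq_two_pow_mul_odd (n := (j - i).toNat) (by omega)
  have hj : j = i + 2 ^ s * m := by
    have := Int.toNat_of_nonneg (sub_nonneg.mpr hij.le)
    rw [hsm] at this
    push_cast at this
    linarith
  have hst : s + t < n := by
    have hm1 : (1 : ℤ) ≤ m := by exact_mod_cast hm.pos
    have : (2 : ℤ) ^ s < 2 ^ (n - t) := by nlinarith [pow_pos (two_pos (α := ℤ)) s]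
    have := (pow_lt_pow_iff_right₀ (by norm_num : (1 : ℤ) < 2)).mp this
    omega
  obtain ⟨K, hK, hKeq⟩ := hπ.exists_odd_eval_sq_sub hst hc (hm.natCast (R := ℤ)) i
  rw [hj, hKeq]
  intro h
  have h2 := (pow_dvd_pow 2 (by omega : s + t + 1 + 1 ≤ n + 1)).trans h
  rw [pow_succ] at h2
  exact Int.not_even_iff_odd.mpr hK
    (even_iff_two_dvd.mpr (Int.dvd_of_mul_dvd_mul_left (by positivity) h2))

end TwoPow

end IsPermPoly

theorem Nat.gcd_two_pow_mul_odd_two_pow {t n c : ℕ} (hc : Odd c) (ht : t ≤ n) :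
    Nat.gcd (2 ^ t * c) (2 ^ n) = 2 ^ t := by
  rw [← Nat.add_sub_cancel' ht, pow_add, Nat.gcd_mul_left,
    Nat.Coprime.pow_right _ (Nat.coprime_two_right.mpr hc), mul_one]

theorem bijective_fin_intCast_of_not_dvd_sub {M : ℕ} [NeZero M] (f : ℤ → ℤ)
    (hf : ∀ i j : ℤ, i < j → j - i < M → ¬ (M : ℤ) ∣ f j - f i) :
    Function.Bijective fun k : Fin M => (f ((k : ℕ) : ℤ) : ZMod M) := by
  refine (Fintype.bijective_iff_injective_and_card _).mpr ⟨?_, by simp⟩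
  have hne : ∀ k₁ k₂ : Fin M, k₁ < k₂ → (f k₁ : ZMod M) ≠ f k₂ := by
    intro k₁ k₂ hlt heq
    rw [ZMod.intCast_eq_intCast_iff_dvd_sub] at heq
    exact hf _ _ (by exact_mod_cast hlt) (by omega) heq
  intro k₁ k₂ h
  rcases lt_trichotomy k₁ k₂ with hlt | rfl | hgt
  · exact absurd h (hne _ _ hlt)
  · rfl
  · exact absurd h.symm (hne _ _ hgt)

theorem stmt_12_general (n : ℕ) (N : ℕ) (hN : N = 2 ^ n)
    (π : Polynomial ℤ) (hconst : π.coeff 0 = 0)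
    (hPP : Function.Bijective
      (fun x : ZMod N => (π.map (Int.castRingHom (ZMod N))).eval x))
    (d : ℕ) (hd0 : 0 < d) (hdN : d < N) (g : ℕ) (hg : g = Nat.gcd d N)
    (H : ℤ → ℤ)
    (hH : ∀ k : ℤ, H k =
      (π.eval (k + (d : ℤ)) ^ 2 - π.eval k ^ 2 - π.eval ((d : ℕ) : ℤ) ^ 2) / 2) :
    (∀ k : ℤ, (2 : ℤ) ∣
        (π.eval (k + (d : ℤ)) ^ 2 - π.eval k ^ 2 - π.eval ((d : ℕ) : ℤ) ^ 2)) ∧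
    (∀ k : ℤ, (g : ℤ) ∣ H k) ∧
    Function.Bijective
      (fun k : Fin (N / g) => ((H ((k : ℕ) : ℤ) / (g : ℤ)) : ZMod (N / g))) := by
  subst hN hg
  obtain ⟨t, c, hc, rfl⟩ := Nat.exists_eq_two_pow_mul_odd hd0.ne'
  have ht : t < n := (Nat.pow_lt_pow_iff_right (by norm_num)).mp
    ((Nat.le_mul_of_pos_right _ hc.pos).trans_lt hdN)
  have hπ : IsPermPoly π (2 ^ n) := hPP
  have hπ0 : π.eval 0 = 0 := by rwa [← coeff_zero_eq_eval_zero]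
  have hdvd := hπ.two_pow_succ_dvd_eval_sq_sub hπ0 ht (hc.natCast (R := ℤ))
  rw [Nat.gcd_two_pow_mul_odd_two_pow hc ht.le, Nat.pow_div ht.le two_pos]
  push_cast at hH ⊢
  have h2 k := (dvd_pow_self 2 t.succ_ne_zero).trans (hdvd k)
  have hH2 : ∀ k, 2 * H k =
      π.eval (k + 2 ^ t * (c : ℤ)) ^ 2 - π.eval k ^ 2 - π.eval (2 ^ t * (c : ℤ)) ^ 2 :=
    fun k => by rw [hH]; exact Int.mul_ediv_cancel' (h2 k)
  have hgH : ∀ k, 2 ^ t ∣ H k := fun k =>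
    Int.dvd_of_mul_dvd_mul_left two_ne_zero (by rw [hH2, ← pow_succ']; exact hdvd k)
  refine ⟨h2, hgH,
    bijective_fin_intCast_of_not_dvd_sub (fun k => H k / 2 ^ t) fun i j hij hji hdiv => ?_⟩
  refine hπ.not_two_pow_succ_dvd_eval_sq_sub (hc.natCast (R := ℤ)) hij (by exact_mod_cast hji) ?_
  obtain ⟨z, hz⟩ := hdiv
  push_cast at hz
  have hq : ∀ k, H k = 2 ^ t * (H k / 2 ^ t) := fun k => (Int.mul_ediv_cancel' (hgH k)).symm
  have hpow : (2 : ℤ) ^ t * 2 ^ (n - t) = 2 ^ n := by rw [← pow_add, Nat.add_sub_cancel' ht.le]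
  exact ⟨z, by linear_combination -hH2 j + hH2 i + 2 * hq j - 2 * hq i + 2 * 2 ^ t * hz +
    2 * z * hpow⟩

/-- (Appendix C key step): for `N = 2^n` (`n ≥ 2`), a permutation polynomial `π` over
`ℤ_{2^n}` with `π(0) = 0`, a shift `0 < d < N` and `g = gcd(d,N)`, the quantity
`H_d(k) = (π(k+d)² − π(k)² − π(d)²)/2` is an integer divisible by `g`, and `H_d(k)/g`
induces a permutation of `ℤ_{N/g}` (its values at `k = 0,…,N/g−1` form a complete residue
system modulo `N/g`). -/
theorem stmt_12 (n : ℕ) (hn : 2 ≤ n) (N : ℕ) (hN : N = 2 ^ n)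
    (π : Polynomial ℤ) (hconst : π.coeff 0 = 0)
    (hPP : Function.Bijective
      (fun x : ZMod N => (π.map (Int.castRingHom (ZMod N))).eval x))
    (d : ℕ) (hd0 : 0 < d) (hdN : d < N) (g : ℕ) (hg : g = Nat.gcd d N)
    (H : ℤ → ℤ)
    (hH : ∀ k : ℤ, H k =
      (π.eval (k + (d : ℤ)) ^ 2 - π.eval k ^ 2 - π.eval ((d : ℕ) : ℤ) ^ 2) / 2) :
    (∀ k : ℤ, (2 : ℤ) ∣
        (π.eval (k + (d : ℤ)) ^ 2 - π.eval k ^ 2 - π.eval ((d : ℕ) : ℤ) ^ 2)) ∧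
    (∀ k : ℤ, (g : ℤ) ∣ H k) ∧
    Function.Bijective
      (fun k : Fin (N / g) => ((H ((k : ℕ) : ℤ) / (g : ℤ)) : ZMod (N / g))) :=
  stmt_12_general n N hN π hconst hPP d hd0 hdN g hg H hH
end

section
/- Let p ≥ 3 be a prime, n ≥ 2 an integer, and N = p^n·N₁, where gcd(p, N₁) = 1 and N₁ is either 1 or a product q₁q₂⋯q_r of distinct primes such that (q_i − 1) divides (p − 1) for every i. Let a, b be integers such that π(x) = x^p + a·x + b is a permutation polynomial over ℤ_N with a ≢ 0 (mod p) and a ≢ −1 (mod p), and write δ = N mod 2. Then for all integers u₁, u₂ coprime to N, all integers v, d, r, and each ε ∈ {1, −1}: (a) there exists an integer k such that u₁·(π(k) + δ)·π(k) − 2·v·k − ε·u₂·(k + d + δ)·(k + d) − r ≢ 0 (mod 2N); and (b) there exists an integer k such that u₁·(k + δ)·k − 2·v·π(k) − ε·u₂·(π(k) + d + δ)·(π(k) + d) − r ≢ 0 (mod 2N). Consequently, neither the interleaved sequence s∘π nor s∘π⁻¹ is obtained from any Zadoff–Chu sequence by any composition of rotation, translation, decimation, linear frequency modulation, and conjugation.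 -/
/-!
Only the `p`-part of the modulus matters: as `p² ∣ 2N`, it suffices that
`Q(x, k) = u x² + α x − (e k² + β k + γ)` with `p ∤ u` cannot vanish modulo `p²` at `x = π(k)`
for all `k`. Modulo `p`, Fermat gives `π(k) ≡ (a + 1) k + b`, so `k ↦ Q(π(k), k)` is a quadratic
in `k` vanishing identically mod `p`, whence `2 (u (a + 1)² − e) ≡ 0`. Since
`π(k + p) ≡ π(k) + a p (mod p²)`, the difference `Q(π(k + p), k + p) − Q(π(k), k)` is `p` times
a function of `k` that is linear mod `p`, whence `2 (u a (a + 1) − e) ≡ 0`. Subtracting,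
`p ∣ 2 u (a + 1)`, impossible for odd `p` with `a ≢ −1`. After negation, (b) has the same shape
with `x = π(k) + d` and the roles of `u₁` and `ε u₂` exchanged.
-/

theorem Int.pow_add_mul_add_modEq_linear {p : ℕ} (hp : p.Prime) (a b k : ℤ) :
    k ^ p + a * k + b ≡ (a + 1) * k + b [ZMOD p] :=
  calc k ^ p + a * k + b = k ^ p + (a * k + b) := by ring
    _ ≡ k + (a * k + b) [ZMOD p] := (Int.ModEq.pow_prime_eq_self hp k).add_right _
    _ = (a + 1) * k + b := by ring

theorem Int.pow_add_mul_add_shift_modEq (p : ℕ) (a b k : ℤ) :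
    (k + p) ^ p + a * (k + p) + b ≡ k ^ p + a * k + b + a * p [ZMOD p ^ 2] := by
  have hdvd : (p : ℤ) ^ (1 + 1) ∣ (k + p) ^ p ^ 1 - k ^ p ^ 1 :=
    dvd_sub_pow_of_dvd_sub (by simp) 1
  have h : (k + p) ^ p ≡ k ^ p [ZMOD p ^ 2] :=
    (Int.modEq_iff_dvd.mpr (by simpa using hdvd)).symm
  calc (k + p) ^ p + a * (k + p) + b = (k + p) ^ p + (a * (k + p) + b) := by ring
    _ ≡ k ^ p + (a * (k + p) + b) [ZMOD p ^ 2] := h.add_right _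
    _ = k ^ p + a * k + b + a * p := by ring

theorem Int.not_dvd_of_gcd_eq_one {p u m : ℤ} (hp : ¬ IsUnit p) (h : Int.gcd u m = 1)
    (hm : p ∣ m) : ¬ p ∣ u :=
  fun hu => hp ((Int.isCoprime_iff_gcd_eq_one.mpr h).isUnit_of_dvd' hu hm)

section QuadraticModPrimeSq

variable {p : ℕ} [Fact p.Prime] {f : ℤ → ℤ} {a b u α e β γ : ℤ}

theorem leading_coeff_eq_of_forall_dvd_quadratic
    (hf : ∀ k, f k ≡ (a + 1) * k + b [ZMOD p])
    (hF : ∀ k, (p : ℤ) ∣ u * f k ^ 2 + α * f k - (e * k ^ 2 + β * k + γ)) :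
    (2 * (u * (a + 1) ^ 2 - e) : ZMod p) = 0 := by
  have hQ : ∀ k : ℤ, (u * ((a + 1) * k + b) ^ 2 + α * ((a + 1) * k + b)
      - (e * k ^ 2 + β * k + γ) : ZMod p) = 0 := by
    intro k
    have hFk := (ZMod.intCast_zmod_eq_zero_iff_dvd _ p).mpr (hF k)
    have hfk := (ZMod.intCast_eq_intCast_iff _ _ p).mpr (hf k)
    push_cast at hFk hfk
    rwa [hfk] at hFk
  have h1 := hQ 1
  have hm1 := hQ (-1)
  have h0 := hQ 0
  push_cast at h1 hm1 h0
  linear_combination h1 + hm1 - 2 * h0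

theorem derivative_eq_of_forall_sq_dvd_quadratic
    (hf : ∀ k, f k ≡ (a + 1) * k + b [ZMOD p])
    (hfp : ∀ k, f (k + p) ≡ f k + a * p [ZMOD p ^ 2])
    (hF : ∀ k, (p : ℤ) ^ 2 ∣ u * f k ^ 2 + α * f k - (e * k ^ 2 + β * k + γ)) :
    (2 * (u * a * (a + 1) - e) : ZMod p) = 0 := by
  have hL : ∀ k, (p : ℤ) ∣ 2 * u * a * f k + α * a - (2 * e * k + β) := by
    intro k
    obtain ⟨t, ht⟩ := (hfp k).symm.dvd
    have hdiff : (p : ℤ) ^ 2 ∣ p * (2 * u * a * f k + α * a - (2 * e * k + β)) +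
        p ^ 2 * (2 * u * f k * t + u * (a + p * t) ^ 2 + α * t - e) := by
      refine (dvd_sub (hF (k + p)) (hF k)).trans (dvd_of_eq ?_)
      rw [show f (k + p) = f k + a * p + p ^ 2 * t by linarith]
      ring
    have hdvd := (dvd_add_left (dvd_mul_right _ _)).mp hdiff
    rw [pow_two] at hdvd
    exact (mul_dvd_mul_iff_left (by exact_mod_cast (Fact.out : p.Prime).ne_zero)).mp hdvd
  have hL' : ∀ k : ℤ,
      (2 * u * a * ((a + 1) * k + b) + α * a - (2 * e * k + β) : ZMod p) = 0 := by
    intro k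
    have hLk := (ZMod.intCast_zmod_eq_zero_iff_dvd _ p).mpr (hL k)
    have hfk := (ZMod.intCast_eq_intCast_iff _ _ p).mpr (hf k)
    push_cast at hLk hfk
    rwa [hfk] at hLk
  have h1 := hL' 1
  have h0 := hL' 0
  push_cast at h1 h0
  linear_combination h1 - h0

theorem exists_not_sq_dvd_quadratic (hp2 : p ≠ 2)
    (hf : ∀ k, f k ≡ (a + 1) * k + b [ZMOD p])
    (hfp : ∀ k, f (k + p) ≡ f k + a * p [ZMOD p ^ 2]) (hu : ¬ (p : ℤ) ∣ u)
    (ha : ¬ (p : ℤ) ∣ a + 1) :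
    ∃ k, ¬ (p : ℤ) ^ 2 ∣ u * f k ^ 2 + α * f k - (e * k ^ 2 + β * k + γ) := by
  by_contra! hF
  have h1 := leading_coeff_eq_of_forall_dvd_quadratic hf fun k =>
    (dvd_pow_self _ two_ne_zero).trans (hF k)
  have h2 := derivative_eq_of_forall_sq_dvd_quadratic hf hfp hF
  have hdvd : (p : ℤ) ∣ 2 * u * (a + 1) := by
    rw [← ZMod.intCast_zmod_eq_zero_iff_dvd]
    push_cast
    linear_combination h1 - h2
  have hpI : Prime (p : ℤ) := Nat.prime_iff_prime_int.mp Fact.out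
  rcases hpI.dvd_mul.mp hdvd with h | h
  · rcases hpI.dvd_mul.mp h with h | h
    · exact hp2 ((Nat.prime_dvd_prime_iff_eq Fact.out Nat.prime_two).mp (by exact_mod_cast h))
    · exact hu h
  · exact ha h

end QuadraticModPrimeSq

theorem stmt_16_general (p : ℕ) (hp : p.Prime) (hp3 : 3 ≤ p) (n : ℕ) (hn : 2 ≤ n)
    (N N₁ : ℕ) (hN : N = p ^ n * N₁)
    (a b : ℤ)
    (ha1 : ¬ a ≡ -1 [ZMOD (p : ℤ)]) :
    ∀ (u₁ u₂ : ℤ), Int.gcd u₁ (N : ℤ) = 1 → Int.gcd u₂ (N : ℤ) = 1 →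
      ∀ (v d r : ℤ) (ε : ℤ), (ε = 1 ∨ ε = -1) →
        ((∃ k : ℤ, ¬ ((2 * (N : ℤ)) ∣
            (u₁ * ((k ^ p + a * k + b) + ((N % 2 : ℕ) : ℤ)) * (k ^ p + a * k + b)
              - 2 * v * k
              - ε * u₂ * (k + d + ((N % 2 : ℕ) : ℤ)) * (k + d) - r))) ∧
          (∃ k : ℤ, ¬ ((2 * (N : ℤ)) ∣
            (u₁ * (k + ((N % 2 : ℕ) : ℤ)) * k
              - 2 * v * (k ^ p + a * k + b)
              - ε * u₂ * ((k ^ p + a * k + b) + d + ((N % 2 : ℕ) : ℤ))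
                  * ((k ^ p + a * k + b) + d) - r)))) := by
  intro u₁ u₂ hu₁ hu₂ v d r ε hε
  have := Fact.mk hp
  have hp2 : p ≠ 2 := by omega
  have hpN : (p : ℤ) ^ 2 ∣ N := by
    rw [hN]
    exact_mod_cast (pow_dvd_pow p hn).mul_right N₁
  have hpu {u : ℤ} (h : Int.gcd u N = 1) : ¬ (p : ℤ) ∣ u :=
    Int.not_dvd_of_gcd_eq_one (Nat.prime_iff_prime_int.mp hp).not_isUnit h
      ((dvd_pow_self _ two_ne_zero).trans hpN)
  have ha : ¬ (p : ℤ) ∣ a + 1 := fun h =>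
    ha1 (Int.modEq_iff_dvd.mpr (h.neg_right.trans (dvd_of_eq (by ring))))
  have hεu₂ : ¬ (p : ℤ) ∣ ε * u₂ := by
    rw [(Int.isUnit_iff.mpr hε).dvd_mul_left]
    exact hpu hu₂
  have hp2N : (p : ℤ) ^ 2 ∣ 2 * N := hpN.mul_left 2
  set δ : ℤ := ((N % 2 : ℕ) : ℤ)
  constructor
  · obtain ⟨k, hk⟩ := exists_not_sq_dvd_quadratic (f := fun k => k ^ p + a * k + b)
      (α := u₁ * δ) (e := ε * u₂) (β := 2 * v + ε * u₂ * (2 * d + δ))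
      (γ := ε * u₂ * (d + δ) * d + r)
      hp2 (Int.pow_add_mul_add_modEq_linear hp a b) (Int.pow_add_mul_add_shift_modEq p a b)
      (hpu hu₁) ha
    exact ⟨k, fun h => hk ((hp2N.trans h).trans (dvd_of_eq (by ring)))⟩
  · obtain ⟨k, hk⟩ := exists_not_sq_dvd_quadratic (f := fun k => k ^ p + a * k + (b + d))
      (α := ε * u₂ * δ + 2 * v) (e := u₁) (β := u₁ * δ) (γ := 2 * v * d - r)
      hp2 (Int.pow_add_mul_add_modEq_linear hp a (b + d))
      (Int.pow_add_mul_add_shift_modEq p a (b + d)) hεu₂ ha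
    exact ⟨k, fun h => hk ((hp2N.trans h).neg_right.trans (dvd_of_eq (by ring)))⟩

/-- Proposition 5.3(i): under the setting of Theorem 4.1 (with `π(x) = x^p + a·x + b` a
permutation polynomial over `ℤ_N`, `a ≢ 0, −1 (mod p)`, `δ = N mod 2`), the CAZAC
sequences `s∘π` and `s∘π⁻¹` are inequivalent to ZC sequences: for all `u₁, u₂` coprime to
`N`, all `v, d, r` and each sign `ε ∈ {1,−1}`, (a) there is `k` with
`u₁(π(k)+δ)π(k) − 2vk − ε·u₂(k+d+δ)(k+d) − r ≢ 0 (mod 2N)`, and (b) there is `k` with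
`u₁(k+δ)k − 2v·π(k) − ε·u₂(π(k)+d+δ)(π(k)+d) − r ≢ 0 (mod 2N)`. -/
theorem stmt_16 (p : ℕ) (hp : p.Prime) (hp3 : 3 ≤ p) (n : ℕ) (hn : 2 ≤ n)
    (N N₁ : ℕ) (hN : N = p ^ n * N₁) (hcop : Nat.Coprime p N₁)
    (r' : ℕ) (q : Fin r' → ℕ) (hq : ∀ i, (q i).Prime) (hinj : Function.Injective q)
    (hN₁ : N₁ = ∏ i, q i) (hqdvd : ∀ i, (q i - 1) ∣ (p - 1))
    (a b : ℤ)
    (hPP : Function.Bijective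
      (fun x : ZMod N => x ^ p + (a : ZMod N) * x + (b : ZMod N)))
    (ha0 : ¬ a ≡ 0 [ZMOD (p : ℤ)]) (ha1 : ¬ a ≡ -1 [ZMOD (p : ℤ)]) :
    ∀ (u₁ u₂ : ℤ), Int.gcd u₁ (N : ℤ) = 1 → Int.gcd u₂ (N : ℤ) = 1 →
      ∀ (v d r : ℤ) (ε : ℤ), (ε = 1 ∨ ε = -1) →
        ((∃ k : ℤ, ¬ ((2 * (N : ℤ)) ∣
            (u₁ * ((k ^ p + a * k + b) + ((N % 2 : ℕ) : ℤ)) * (k ^ p + a * k + b)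
              - 2 * v * k
              - ε * u₂ * (k + d + ((N % 2 : ℕ) : ℤ)) * (k + d) - r))) ∧
          (∃ k : ℤ, ¬ ((2 * (N : ℤ)) ∣
            (u₁ * (k + ((N % 2 : ℕ) : ℤ)) * k
              - 2 * v * (k ^ p + a * k + b)
              - ε * u₂ * ((k ^ p + a * k + b) + d + ((N % 2 : ℕ) : ℤ))
                  * ((k ^ p + a * k + b) + d) - r)))) :=
  stmt_16_general p hp hp3 n hn N N₁ hN a b ha1
end

section
/- Let p ≥ 3 be a prime, n ≥ 2 an integer, and N = p^n·N₁, where gcd(p, N₁) = 1 and N₁ is either 1 or a product q₁q₂⋯q_r of distinct primes such that (q_i − 1) divides (p − 1) for every i. Let a, b be integers such that π(x) = x^p + a·x + b is a permutation polynomial over ℤ_N with a ≢ 0 (mod p) and a ≢ −1 (mod p), and write δ = N mod 2. Let π′(x) = f₂x² + f₁x be any quadratic polynomial with integer coefficients that is a permutation polynomial over ℤ_N with f₂ ≡ 0 (mod p) and f₁ ≢ 0 (mod p). Then for all integers u₁, u₂ coprime to N, all integers v, d, r, and each ε ∈ {1, −1}: (a) there exists an integer k such that u₁·(π(k) + δ)·π(k)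 − 2·v·k − ε·u₂·(π′(k) + d + δ)·(π′(k) + d) − r ≢ 0 (mod 2N); and (b) there exists an integer k such that u₁·(π(π′(k)) + δ)·π(π′(k)) − 2·v·π′(k) − ε·u₂·(k + d + δ)·(k + d) − r ≢ 0 (mod 2N). Consequently, the CAZAC sequence s∘π is not obtained from any ZC sequence interleaved by a quadratic permutation polynomial, or by the inverse of a quadratic permutation polynomial, via any composition of rotation, translation, decimation, linear frequency modulation, and conjugation. -/
/-!
If the congruence held for every `k`, it would hold modulo `p²` (as `p² ∣ N`). Modulo `p` the
Frobenius `k ^ p ≡ k` turns the exponent into a quadratic polynomial in `k`, whose second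
difference gives `u₁ α² ≡ c γ²` (with `c = ε u₂`), where `α`, `γ` are the slopes of the two interleaved indices
modulo `p`. Shifting `k` by `p` moves `k ^ p` only by a multiple of `p²` while linear terms move by
`p` times their slope, so the exponent moves by `p` times a linear polynomial in `k`; its leading
coefficient gives `u₁ σ α ≡ c γ²`, where `σ` is the `p`-step increment of the index built from
`π`. Hence `u₁ α (α - σ) ≡ 0`, and `α - σ` is `1` in case (a) and `f₁` in case (b), so
`u₁ (1 + a) ≡ 0 (mod p)`, contradicting `gcd(u₁, N) = 1` and `a ≢ -1`.
-/

def HasStepIncrement (p : ℕ) (X : ℤ → ℤ) (σ : ℤ) : Prop :=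
  ∀ k, X (k + p) ≡ X k + p * σ [ZMOD p ^ 2]

namespace HasStepIncrement

variable {p : ℕ} {X : ℤ → ℤ} {σ : ℤ}

theorem id : HasStepIncrement p (fun k => k) 1 := fun k => by simp [Int.ModEq.refl]

theorem add_const (h : HasStepIncrement p X σ) (b : ℤ) :
    HasStepIncrement p (fun k => X k + b) σ := fun k => by
  simpa only [add_right_comm] using (h k).add_right b

theorem quadratic {f₂ : ℤ} (hf₂ : (p : ℤ) ∣ f₂) (f₁ : ℤ) :
    HasStepIncrement p (fun k => f₂ * k ^ 2 + f₁ * k) f₁ := fun k => by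
  obtain ⟨g, rfl⟩ := hf₂
  exact Int.modEq_iff_dvd.mpr ⟨-(g * (2 * k + p)), by ring⟩

theorem pow (h : HasStepIncrement p X σ) :
    HasStepIncrement p (fun k => X k ^ p) 0 := fun k => by
  have hp1 : X (k + p) ≡ X k [ZMOD p] :=
    ((h k).of_dvd (dvd_pow_self _ two_ne_zero)).trans (by simp [Int.ModEq])
  have := dvd_sub_pow_of_dvd_sub (p := p) (k := 1) hp1.symm.dvd
  rw [mul_zero, add_zero]
  exact (Int.modEq_iff_dvd.mpr (by simpa using this)).symm

theorem comp_permPoly (h : HasStepIncrement p X σ) (a b : ℤ) :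
    HasStepIncrement p (fun k => X k ^ p + a * X k + b) (a * σ) := fun k => by
  convert ((h.pow k).add ((h k).mul_left a)).add_right b using 1
  push_cast; ring

end HasStepIncrement

section

variable {p : ℕ} {X Y L : ℤ → ℤ} {σ τ ℓ u v c δ r : ℤ}

theorem dvd_increment_of_forall_sq_dvd (hp : p ≠ 0) (hX : HasStepIncrement p X σ)
    (hY : HasStepIncrement p Y τ) (hL : HasStepIncrement p L ℓ)
    (hF : ∀ k, (p : ℤ) ^ 2 ∣ u * (X k + δ) * X k - 2 * v * L k - c * (Y k + δ) * Y k - r)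
    (k : ℤ) : (p : ℤ) ∣ u * σ * (2 * X k + δ) - 2 * v * ℓ - c * τ * (2 * Y k + δ) := by
  have hcast : ∀ {a b : ℤ}, a ≡ b [ZMOD p ^ 2] → (a : ZMod (p ^ 2)) = b := fun h =>
    (ZMod.intCast_eq_intCast_iff _ _ _).mpr (by exact_mod_cast h)
  have hzero : ∀ k, ((u * (X k + δ) * X k - 2 * v * L k - c * (Y k + δ) * Y k - r : ℤ) :
      ZMod (p ^ 2)) = 0 := fun k =>
    (ZMod.intCast_zmod_eq_zero_iff_dvd _ _).mpr (by exact_mod_cast hF k)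
  have hP : (p : ZMod (p ^ 2)) ^ 2 = 0 := by exact_mod_cast ZMod.natCast_self (p ^ 2)
  have hshift := hzero (k + p)
  push_cast [hcast (hX k), hcast (hY k), hcast (hL k)] at hshift
  have hk := hzero k
  push_cast at hk
  have : (((p * (u * σ * (2 * X k + δ) - 2 * v * ℓ - c * τ * (2 * Y k + δ)) : ℤ)) :
      ZMod (p ^ 2)) = 0 := by
    push_cast
    linear_combination hshift - hk - (u * σ ^ 2 - c * τ ^ 2) * hP
  rw [ZMod.intCast_zmod_eq_zero_iff_dvd] at this
  push_cast at this
  rw [pow_two] at this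
  exact (mul_dvd_mul_iff_left (by exact_mod_cast hp)).mp this

theorem mul_mul_sub_eq_zero_of_forall_sq_dvd [Fact p.Prime] (hp2 : p ≠ 2)
    (hX : HasStepIncrement p X σ) (hY : HasStepIncrement p Y τ) (hL : HasStepIncrement p L ℓ)
    {α β η ℓ' μ : ZMod p} (hXmod : ∀ k : ℤ, (X k : ZMod p) = α * k + β)
    (hYmod : ∀ k : ℤ, (Y k : ZMod p) = τ * k + η) (hLmod : ∀ k : ℤ, (L k : ZMod p) = ℓ' * k + μ)
    (hF : ∀ k, (p : ℤ) ^ 2 ∣ u * (X k + δ) * X k - 2 * v * L k - c * (Y k + δ) * Y k - r) :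
    (u : ZMod p) * α * (α - σ) = 0 := by
  have h2 : (2 : ZMod p) ≠ 0 := fun h => hp2 <|
    (Nat.prime_dvd_prime_iff_eq Fact.out Nat.prime_two).mp
      ((ZMod.natCast_eq_zero_iff 2 p).mp (by exact_mod_cast h))
  have hzero : ∀ k : ℤ, (u : ZMod p) * (α * k + β + δ) * (α * k + β) - 2 * v * (ℓ' * k + μ)
      - c * (τ * k + η + δ) * (τ * k + η) - r = 0 := fun k => by
    have := (ZMod.intCast_zmod_eq_zero_iff_dvd _ p).mpr ((dvd_pow_self _ two_ne_zero).trans (hF k))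
    push_cast [hXmod, hYmod, hLmod] at this
    exact this
  have hdiff : ∀ k : ℤ, (u : ZMod p) * σ * (2 * (α * k + β) + δ) - 2 * v * ℓ
      - c * τ * (2 * (τ * k + η) + δ) = 0 := fun k => by
    have := (ZMod.intCast_zmod_eq_zero_iff_dvd _ p).mpr
      (dvd_increment_of_forall_sq_dvd (NeZero.ne p) hX hY hL hF k)
    push_cast [hXmod, hYmod] at this
    exact this
  have hquad : (u : ZMod p) * α ^ 2 = c * τ ^ 2 := mul_left_cancel₀ h2 <| by
    linear_combination hzero 1 + hzero (-1) - 2 * hzero 0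
  have hlin : (u : ZMod p) * σ * α = c * τ ^ 2 := mul_left_cancel₀ h2 <| by
    linear_combination hdiff 1 - hdiff 0
  linear_combination hquad - hlin

end

theorem ZMod.cast_permPoly {p : ℕ} [Fact p.Prime] (x a b : ℤ) :
    ((x ^ p + a * x + b : ℤ) : ZMod p) = (1 + a) * x + b := by
  push_cast
  rw [ZMod.pow_card]
  ring

theorem ZMod.cast_quadratic {p : ℕ} {f₂ : ℤ} (hf₂ : (p : ℤ) ∣ f₂) (f₁ k : ℤ) :
    ((f₂ * k ^ 2 + f₁ * k : ℤ) : ZMod p) = f₁ * k := by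
  push_cast
  rw [(ZMod.intCast_zmod_eq_zero_iff_dvd f₂ p).mpr hf₂]
  ring

theorem stmt_17_general (p : ℕ) (hp : p.Prime) (hp3 : 3 ≤ p) (n : ℕ) (hn : 2 ≤ n)
    (N N₁ : ℕ) (hN : N = p ^ n * N₁)
    (a b : ℤ)
    (ha1 : ¬ a ≡ -1 [ZMOD (p : ℤ)])
    (f₂ f₁ : ℤ)
    (hf₂ : f₂ ≡ 0 [ZMOD (p : ℤ)]) (hf₁ : ¬ f₁ ≡ 0 [ZMOD (p : ℤ)]) :
    ∀ (u₁ u₂ : ℤ), Int.gcd u₁ (N : ℤ) = 1 → Int.gcd u₂ (N : ℤ) = 1 →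
      ∀ (v d r : ℤ) (ε : ℤ), (ε = 1 ∨ ε = -1) →
        ((∃ k : ℤ, ¬ ((2 * (N : ℤ)) ∣
            (u₁ * ((k ^ p + a * k + b) + ((N % 2 : ℕ) : ℤ)) * (k ^ p + a * k + b)
              - 2 * v * k
              - ε * u₂ * ((f₂ * k ^ 2 + f₁ * k) + d + ((N % 2 : ℕ) : ℤ))
                  * ((f₂ * k ^ 2 + f₁ * k) + d) - r))) ∧
          (∃ k : ℤ, ¬ ((2 * (N : ℤ)) ∣
            (u₁ * (((f₂ * k ^ 2 + f₁ * k) ^ p + a * (f₂ * k ^ 2 + f₁ * k) + b)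
                    + ((N % 2 : ℕ) : ℤ))
                * ((f₂ * k ^ 2 + f₁ * k) ^ p + a * (f₂ * k ^ 2 + f₁ * k) + b)
              - 2 * v * (f₂ * k ^ 2 + f₁ * k)
              - ε * u₂ * (k + d + ((N % 2 : ℕ) : ℤ)) * (k + d) - r)))) := by
  intro u₁ u₂ hu₁ _ v d r ε _
  have : Fact p.Prime := ⟨hp⟩
  have hsqN : (p : ℤ) ^ 2 ∣ N := by
    rw [hN]
    exact_mod_cast (pow_dvd_pow p hn).mul_right N₁
  have hsq : (p : ℤ) ^ 2 ∣ 2 * N := hsqN.mul_left 2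
  have hu : (u₁ : ZMod p) ≠ 0 := fun h => hp.not_dvd_one <| Int.natCast_dvd_natCast.mp <| by
    simpa [hu₁] using Int.dvd_coe_gcd ((ZMod.intCast_zmod_eq_zero_iff_dvd _ _).mp h)
      ((dvd_pow_self _ two_ne_zero).trans hsqN)
  have ha : (1 + a : ZMod p) ≠ 0 := fun h =>
    ha1 ((ZMod.intCast_eq_intCast_iff _ _ _).mp (by push_cast; linear_combination h))
  have hf₁' : (f₁ : ZMod p) ≠ 0 := fun h =>
    hf₁ ((ZMod.intCast_eq_intCast_iff _ _ _).mp (by simpa using h))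
  have hf₂' : (p : ℤ) ∣ f₂ := Int.modEq_zero_iff_dvd.mp hf₂
  have hπ' := HasStepIncrement.quadratic hf₂' f₁
  constructor
  · by_contra! h
    have := mul_mul_sub_eq_zero_of_forall_sq_dvd (by omega)
      (HasStepIncrement.id.comp_permPoly a b) (hπ'.add_const d) HasStepIncrement.id
      (α := 1 + a) (η := d) (ℓ' := 1) (μ := 0) (ZMod.cast_permPoly · a b)
      (fun k => by push_cast [ZMod.cast_quadratic hf₂']; ring) (fun k => by ring)
      (fun k => hsq.trans (h k))
    push_cast at this
    exact mul_ne_zero hu ha (by linear_combination this)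
  · by_contra! h
    have := mul_mul_sub_eq_zero_of_forall_sq_dvd (by omega)
      (hπ'.comp_permPoly a b) (HasStepIncrement.id.add_const d) hπ'
      (α := (1 + a) * f₁) (β := b) (η := d) (ℓ' := f₁) (μ := 0)
      (fun k => by rw [ZMod.cast_permPoly, ZMod.cast_quadratic hf₂']; ring)
      (fun k => by push_cast; ring) (fun k => by rw [ZMod.cast_quadratic hf₂']; ring)
      (fun k => hsq.trans (h k))
    push_cast at this
    exact mul_ne_zero (mul_ne_zero hu ha) (pow_ne_zero 2 hf₁') (by linear_combination this)

/-- Proposition 5.3(ii): under the setting of Theorem 4.1 (with `π(x) = x^p + a·x + b` a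
permutation polynomial over `ℤ_N`, `a ≢ 0, −1 (mod p)`, `δ = N mod 2`), and for any
quadratic permutation polynomial `π'(x) = f₂x² + f₁x` over `ℤ_N` with `p ∣ f₂` and
`p ∤ f₁`, the CAZAC sequence `s∘π` is inequivalent to ZC sequences interleaved by `π'` or
by the inverse of `π'`: for all `u₁, u₂` coprime to `N`, all `v, d, r` and each sign
`ε ∈ {1,−1}`, (a) there is `k` with
`u₁(π(k)+δ)π(k) − 2vk − ε·u₂(π'(k)+d+δ)(π'(k)+d) − r ≢ 0 (mod 2N)`, and (b) there is `k`
with `u₁(π(π'(k))+δ)π(π'(k)) − 2v·π'(k) − ε·u₂(k+d+δ)(k+d) − r ≢ 0 (mod 2N)`. -/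
theorem stmt_17 (p : ℕ) (hp : p.Prime) (hp3 : 3 ≤ p) (n : ℕ) (hn : 2 ≤ n)
    (N N₁ : ℕ) (hN : N = p ^ n * N₁) (hcop : Nat.Coprime p N₁)
    (r' : ℕ) (q : Fin r' → ℕ) (hq : ∀ i, (q i).Prime) (hinj : Function.Injective q)
    (hN₁ : N₁ = ∏ i, q i) (hqdvd : ∀ i, (q i - 1) ∣ (p - 1))
    (a b : ℤ)
    (hPP : Function.Bijective
      (fun x : ZMod N => x ^ p + (a : ZMod N) * x + (b : ZMod N)))
    (ha0 : ¬ a ≡ 0 [ZMOD (p : ℤ)]) (ha1 : ¬ a ≡ -1 [ZMOD (p : ℤ)])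
    (f₂ f₁ : ℤ)
    (hPP' : Function.Bijective
      (fun x : ZMod N => (f₂ : ZMod N) * x ^ 2 + (f₁ : ZMod N) * x))
    (hf₂ : f₂ ≡ 0 [ZMOD (p : ℤ)]) (hf₁ : ¬ f₁ ≡ 0 [ZMOD (p : ℤ)]) :
    ∀ (u₁ u₂ : ℤ), Int.gcd u₁ (N : ℤ) = 1 → Int.gcd u₂ (N : ℤ) = 1 →
      ∀ (v d r : ℤ) (ε : ℤ), (ε = 1 ∨ ε = -1) →
        ((∃ k : ℤ, ¬ ((2 * (N : ℤ)) ∣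
            (u₁ * ((k ^ p + a * k + b) + ((N % 2 : ℕ) : ℤ)) * (k ^ p + a * k + b)
              - 2 * v * k
              - ε * u₂ * ((f₂ * k ^ 2 + f₁ * k) + d + ((N % 2 : ℕ) : ℤ))
                  * ((f₂ * k ^ 2 + f₁ * k) + d) - r))) ∧
          (∃ k : ℤ, ¬ ((2 * (N : ℤ)) ∣
            (u₁ * (((f₂ * k ^ 2 + f₁ * k) ^ p + a * (f₂ * k ^ 2 + f₁ * k) + b)
                    + ((N % 2 : ℕ) : ℤ))
                * ((f₂ * k ^ 2 + f₁ * k) ^ p + a * (f₂ * k ^ 2 + f₁ * k) + b)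
              - 2 * v * (f₂ * k ^ 2 + f₁ * k)
              - ε * u₂ * (k + d + ((N % 2 : ℕ) : ℤ)) * (k + d) - r)))) :=
  stmt_17_general p hp hp3 n hn N N₁ hN a b ha1 f₂ f₁ hf₂ hf₁
end
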